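/- arXiv:1611.08682 — 4 statements merged into one kernel-verified Lean document; each statement's English description precedes it below -/
import Mathlib

section
/- For every κ ∈ ℝ there exist constants A ≥ 0 and r > 0 with the following property. Let X be a complete geodesic metric space that has curvature ≥ κ, let x₁, x₂, x₃ ∈ X have pairwise distances ≤ r, let t > 0 satisfy d(x₁,x₂) ≤ 2t and d(x₁,x₃) ≤ 2t, let m₂ be a midpoint of x₁ and x₃, and let m₃ be a midpoint of x₁ and x₂. Then d(m₂, m₃) ≥ (1/2)·d(x₂,x₃)·(1 − A·t²). -/
open Metric MeasureTheory Set

noncomputable section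

/-- The comparison angle `∠̃_κ(q; x, y)`: the angle at the vertex corresponding to `q` of a
geodesic triangle in the simply connected model surface of constant curvature `κ` whose side
lengths are `d(q,x)`, `d(q,y)`, `d(x,y)`, computed by the law of cosines in each model. -/
def cmpAngle (κ : ℝ) {X : Type*} [MetricSpace X] (q x y : X) : ℝ :=
  if κ = 0 then
    Real.arccos ((dist q x ^ 2 + dist q y ^ 2 - dist x y ^ 2) / (2 * dist q x * dist q y))
  else if 0 < κ then
    Real.arccos ((Real.cos (Real.sqrt κ * dist x y) -
        Real.cos (Real.sqrt κ * dist q x) * Real.cos (Real.sqrt κ * dist q y)) /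
      (Real.sin (Real.sqrt κ * dist q x) * Real.sin (Real.sqrt κ * dist q y)))
  else
    Real.arccos ((Real.cosh (Real.sqrt (-κ) * dist q x) * Real.cosh (Real.sqrt (-κ) * dist q y) -
        Real.cosh (Real.sqrt (-κ) * dist x y)) /
      (Real.sinh (Real.sqrt (-κ) * dist q x) * Real.sinh (Real.sqrt (-κ) * dist q y)))

/-- A constant-speed geodesic parametrized by `[0,1]`. -/
def IsGeodesicSeg {X : Type*} [MetricSpace X] (γ : ℝ → X) : Prop :=
  ∀ s ∈ Set.Icc (0:ℝ) 1, ∀ t ∈ Set.Icc (0:ℝ) 1,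
    dist (γ s) (γ t) = |s - t| * dist (γ 0) (γ 1)

/-- A metric space is geodesic if any two points are joined by a constant-speed geodesic. -/
def GeodesicSpace (X : Type*) [MetricSpace X] : Prop :=
  ∀ x y : X, ∃ γ : ℝ → X, IsGeodesicSeg γ ∧ γ 0 = x ∧ γ 1 = y

/-- `X` has curvature `≥ κ`: the quadruple comparison condition. -/
def CurvGE (κ : ℝ) (X : Type*) [MetricSpace X] : Prop :=
  ∀ q x y z : X, q ≠ x → q ≠ y → q ≠ z → x ≠ y → x ≠ z → y ≠ z →
    cmpAngle κ q x y + cmpAngle κ q y z + cmpAngle κ q z x ≤ 2 * Real.pi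

/-- An `n`-dimensional Alexandrov space of curvature `≥ κ`: a complete, proper, geodesic
metric space of Hausdorff dimension `n` that has curvature `≥ κ`. -/
def IsAlexandrov (n : ℕ) (κ : ℝ) (X : Type*) [MetricSpace X] : Prop :=
  CompleteSpace X ∧ ProperSpace X ∧ GeodesicSpace X ∧
    dimH (Set.univ : Set X) = n ∧ CurvGE κ X

/-- A map into a real vector space is affine if it is affine along every constant-speed
geodesic. -/
def AffineOn {X : Type*} [MetricSpace X] {V : Type*} [AddCommGroup V] [Module ℝ V]
    (F : X → V) : Prop :=
  ∀ γ : ℝ → X, IsGeodesicSeg γ → ∀ t ∈ Set.Icc (0:ℝ) 1,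
    F (γ t) = (1 - t) • F (γ 0) + t • F (γ 1)

/-- A real-valued function is Lipschitz. -/
def IsLip {X : Type*} [MetricSpace X] (f : X → ℝ) : Prop :=
  ∃ L : ℝ, 0 ≤ L ∧ ∀ x y, |f x - f y| ≤ L * dist x y

/-- The optimal Lipschitz constant of a real-valued function. -/
def lipConst {X : Type*} [MetricSpace X] (f : X → ℝ) : ℝ :=
  sInf {L : ℝ | 0 ≤ L ∧ ∀ x y, |f x - f y| ≤ L * dist x y}

/-- `m` is a midpoint of `a` and `b`. -/
def IsMidpointOf {X : Type*} [MetricSpace X] (m a b : X) : Prop :=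
  dist a m = dist a b / 2 ∧ dist b m = dist a b / 2

/-!
If `o` is a midpoint of `x` and `y`, then `∠̃(o; x, y) = π`, so the quadruple condition at `o`
gives `∠̃(o; x, z) + ∠̃(o; z, y) ≤ π`; by the law of cosines of the model plane this is a median
inequality, e.g. `|xz|² + |yz|² ≤ |xy|²/2 + 2|oz|²` for `κ = 0`. Apply it to the median `x₃m₃` of
`x₁x₂x₃` and to the median `m₃m₂` of `x₁x₃m₃`, and eliminate `|x₃m₃|`. For `κ ≥ 0` (with small
triangles if `κ > 0`) this gives `|m₂m₃| ≥ |x₂x₃|/2` outright. For `κ < 0` the defect is controlled by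
`(cosh(α+β) - cosh γ)(cosh γ - cosh(α-β))` with `α, β, γ` the scaled half side lengths, which is
`O(t²γ²)`; this yields `A = -4κ`.
-/

open Real

namespace Real

theorem add_nonneg_of_arccos_add_arccos_le_pi {u v : ℝ} (hu : -1 ≤ u) (hv : -1 ≤ v)
    (h : arccos u + arccos v ≤ π) : 0 ≤ u + v := by
  by_contra! huv
  have : π - arccos v < arccos u := by
    rw [← arccos_neg]; exact arccos_lt_arccos hu (by linarith) (by linarith)
  linarith

theorem cosh_sub_one_le_sq {x : ℝ} (hx : |x| ≤ 1) : cosh x - 1 ≤ x ^ 2 := by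
  have hx2 : x ^ 2 / 2 ≤ 1 / 2 := by nlinarith [sq_abs x, abs_nonneg x]
  have := (cosh_le_exp_half_sq x).trans
    (exp_bound_div_one_sub_of_interval (by positivity) (by linarith))
  rw [le_div_iff₀ (by linarith)] at this
  nlinarith [sq_nonneg x]

theorem sq_sub_sq_le_two_mul_cosh_sub_cosh {x y : ℝ} (hy : 0 ≤ y) (hyx : y ≤ x) :
    x ^ 2 - y ^ 2 ≤ 2 * (cosh x - cosh y) := by
  have hprod : cosh x - cosh y = 2 * sinh ((x + y) / 2) * sinh ((x - y) / 2) := by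
    have h₁ := cosh_add ((x + y) / 2) ((x - y) / 2)
    have h₂ := cosh_sub ((x + y) / 2) ((x - y) / 2)
    rw [show (x + y) / 2 + (x - y) / 2 = x by ring] at h₁
    rw [show (x + y) / 2 - (x - y) / 2 = y by ring] at h₂
    linarith
  have h₁ := self_le_sinh_iff.2 (show 0 ≤ (x + y) / 2 by linarith)
  have h₂ := self_le_sinh_iff.2 (show 0 ≤ (x - y) / 2 by linarith)
  rw [hprod]
  nlinarith

theorem cos_add_mul_cos_sub (α β : ℝ) :
    cos (α + β) * cos (α - β) = cos α ^ 2 + cos β ^ 2 - 1 := by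
  rw [cos_add, cos_sub]
  linear_combination (-sin β ^ 2) * sin_sq α + (cos α ^ 2 - 1) * sin_sq β

theorem cosh_add_mul_cosh_sub (α β : ℝ) :
    cosh (α + β) * cosh (α - β) = cosh α ^ 2 + cosh β ^ 2 - 1 := by
  rw [cosh_add, cosh_sub]
  linear_combination (-sinh β ^ 2) * sinh_sq α + (1 - cosh α ^ 2) * sinh_sq β

theorem le_of_cos_median_ineqs {α β γ P Q : ℝ} (hα : 0 ≤ α) (hβ : 0 ≤ β) (hαβ : α + β < π / 2)
    (hαβγ : α ≤ β + γ) (hβαγ : β ≤ α + γ) (hγαβ : γ ≤ α + β) (hQ : 0 ≤ Q)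
    (h₁ : 2 * cos α * cos P ≤ cos (2 * β) + cos (2 * γ))
    (h₂ : 2 * cos β * cos Q ≤ cos α + cos P) : γ ≤ Q := by
  have hcα : 0 < cos α := cos_pos_of_mem_Ioo ⟨by linarith, by linarith⟩
  have hcβ : 0 < cos β := cos_pos_of_mem_Ioo ⟨by linarith, by linarith⟩
  have hsum : cos (α + β) + cos (α - β) = 2 * cos α * cos β := by rw [cos_add, cos_sub]; ring
  have key : cos Q * (cos (α + β) + cos (α - β)) ≤ cos (α + β) * cos (α - β) + cos γ ^ 2 := by
    rw [hsum, cos_add_mul_cos_sub]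
    nlinarith [mul_le_mul_of_nonneg_left h₂ hcα.le, cos_two_mul β, cos_two_mul γ]
  have hU : cos (α + β) ≤ cos γ := cos_le_cos_of_nonneg_of_le_pi (by linarith) (by linarith) hγαβ
  have hV : cos γ ≤ cos (α - β) := by
    rw [← cos_abs (α - β)]
    exact cos_le_cos_of_nonneg_of_le_pi (abs_nonneg _) (by linarith)
      (abs_sub_le_iff.2 ⟨by linarith, by linarith⟩)
  have hQγ : cos Q ≤ cos γ := by
    refine le_of_mul_le_mul_right ?_ (show 0 < cos (α + β) + cos (α - β) by rw [hsum]; positivity)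
    nlinarith [mul_nonneg (sub_nonneg.2 hU) (sub_nonneg.2 hV)]
  by_contra! h
  exact (cos_lt_cos_of_nonneg_of_le_pi hQ (by linarith) h).not_ge hQγ

theorem mul_one_sub_sq_le_of_cosh_median_ineqs {α β γ P Q : ℝ} (hα : 0 ≤ α) (hβ : 0 ≤ β)
    (hαβ : α + β ≤ 1) (hαβγ : α ≤ β + γ) (hβαγ : β ≤ α + γ) (hγαβ : γ ≤ α + β) (hQ : 0 ≤ Q)
    (h₁ : cosh (2 * β) + cosh (2 * γ) ≤ 2 * cosh α * cosh P)
    (h₂ : cosh α + cosh P ≤ 2 * cosh β * cosh Q) : γ * (1 - (α + β) ^ 2) ≤ Q := by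
  have hγ : 0 ≤ γ := by linarith
  rcases le_or_gt γ Q with hγQ | hQγ
  · nlinarith [sq_nonneg (α + β)]
  set U := cosh (α + β)
  set V := cosh (α - β)
  set W := cosh γ
  have hsum : U + V = 2 * cosh α * cosh β := by simp only [U, V, cosh_add, cosh_sub]; ring
  have key : U * V + W ^ 2 ≤ cosh Q * (U + V) := by
    rw [hsum, cosh_add_mul_cosh_sub]
    nlinarith [mul_le_mul_of_nonneg_left h₂ (cosh_pos α).le, cosh_two_mul β, cosh_two_mul γ,
      cosh_sq β, cosh_sq γ]
  have hWU : W ≤ U := by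
    rw [cosh_le_cosh, abs_of_nonneg hγ, abs_of_nonneg (by linarith)]
    exact hγαβ
  have hVW : V ≤ W := by
    rw [cosh_le_cosh, abs_of_nonneg hγ]
    exact abs_sub_le_iff.2 ⟨by linarith, by linarith⟩
  have hQW : cosh Q ≤ W := cosh_le_cosh.2 (by rw [abs_of_nonneg hQ, abs_of_nonneg hγ]; exact hQγ.le)
  have hU : U - 1 ≤ (α + β) ^ 2 :=
    cosh_sub_one_le_sq (by rw [abs_of_nonneg (by linarith)]; exact hαβ)
  have hW : W - 1 ≤ γ ^ 2 := cosh_sub_one_le_sq (by rw [abs_of_nonneg hγ]; linarith)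
  have hV : 1 ≤ V := one_le_cosh _
  -- `W - cosh Q` is controlled by `(U - W) * (W - V)`, which is of fourth order
  have h_prod : (W - cosh Q) * (U + V) ≤ (U - W) * (W - V) := by linear_combination key
  have h_fourth : (U - W) * (W - V) ≤ (α + β) ^ 2 * γ ^ 2 :=
    mul_le_mul (by linarith) (by linarith) (by linarith) (by positivity)
  have h_two : (W - cosh Q) * 2 ≤ (W - cosh Q) * (U + V) :=
    mul_le_mul_of_nonneg_left (by linarith [one_le_cosh (α + β)]) (by linarith)
  have h_cosh := sq_sub_sq_le_two_mul_cosh_sub_cosh hQ hQγ.le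
  have h_sq : (γ * (1 - (α + β) ^ 2)) ^ 2 ≤ Q ^ 2 := by
    have : (α + β) ^ 2 ≤ 1 := by nlinarith
    nlinarith [sq_nonneg (α + β), mul_nonneg (sq_nonneg γ) (sq_nonneg (α + β))]
  exact (le_abs_self _).trans (abs_le_of_sq_le_sq h_sq hQ)

end Real

variable {X : Type*} [MetricSpace X]

theorem cmpAngle_zero (q x y : X) :
    cmpAngle 0 q x y =
      arccos ((dist q x ^ 2 + dist q y ^ 2 - dist x y ^ 2) / (2 * dist q x * dist q y)) :=
  if_pos rfl

theorem cmpAngle_of_pos {κ : ℝ} (hκ : 0 < κ) (q x y : X) :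
    cmpAngle κ q x y =
      arccos ((cos (√κ * dist x y) - cos (√κ * dist q x) * cos (√κ * dist q y)) /
        (sin (√κ * dist q x) * sin (√κ * dist q y))) := by
  rw [cmpAngle, if_neg hκ.ne', if_pos hκ]

theorem cmpAngle_of_neg {κ : ℝ} (hκ : κ < 0) (q x y : X) :
    cmpAngle κ q x y =
      arccos ((cosh (√(-κ) * dist q x) * cosh (√(-κ) * dist q y) - cosh (√(-κ) * dist x y)) /
        (sinh (√(-κ) * dist q x) * sinh (√(-κ) * dist q y))) := by
  rw [cmpAngle, if_neg hκ.ne, if_neg hκ.not_gt]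

namespace IsMidpointOf

variable {o x y : X}

theorem ne_left (ho : IsMidpointOf o x y) (hxy : x ≠ y) : o ≠ x := by
  rintro rfl
  have := ho.1
  rw [dist_self] at this
  exact hxy (dist_eq_zero.1 (by linarith))

theorem ne_right (ho : IsMidpointOf o x y) (hxy : x ≠ y) : o ≠ y := by
  rintro rfl
  have := ho.2
  rw [dist_self] at this
  exact hxy (dist_eq_zero.1 (by linarith))

/-- The four special cases are the configurations `x = y`, `z = o`, `z = x` and `z = y`. -/
theorem dist_induction (ho : IsMidpointOf o x y) (z : X) {M : ℝ → ℝ → ℝ → ℝ → Prop}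
    (h_eq : ∀ p, M 0 p p p) (h_center : ∀ a, M a 0 a a) (h_left : ∀ a, M a a 0 (2 * a))
    (h_right : ∀ a, M a a (2 * a) 0)
    (h : x ≠ y → z ≠ o → z ≠ x → z ≠ y → M (dist x y / 2) (dist o z) (dist x z) (dist y z)) :
    M (dist x y / 2) (dist o z) (dist x z) (dist y z) := by
  by_cases hxy : x = y
  · subst hxy
    obtain rfl : x = o := dist_eq_zero.1 (by rw [ho.1, dist_self, zero_div])
    rw [dist_self, zero_div]
    exact h_eq _
  by_cases hzo : z = o
  · subst hzo
    rw [dist_self, ho.1, ho.2]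
    exact h_center _
  by_cases hzx : z = x
  · subst hzx
    rw [dist_self, dist_comm o, ho.1, dist_comm]
    convert h_left _ using 2
    ring
  by_cases hzy : z = y
  · subst hzy
    rw [dist_self, dist_comm o, ho.2]
    convert h_right _ using 2
    ring
  exact h hxy hzo hzx hzy

end IsMidpointOf

namespace CurvGE

variable {κ : ℝ} {o x y x₁ x₂ x₃ m₂ m₃ : X}

/-- `f a b c` is the cosine of the model angle opposite to the side `c`. -/
theorem add_nonneg_of_isMidpointOf {f : ℝ → ℝ → ℝ → ℝ} (hX : CurvGE κ X)
    (hf : ∀ q x y : X, cmpAngle κ q x y = arccos (f (dist q x) (dist q y) (dist x y)))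
    (hf_comm : ∀ a b c, f a b c = f b a c) {z : X} (ho : IsMidpointOf o x y)
    (hxy : x ≠ y) (hzo : z ≠ o) (hzx : z ≠ x) (hzy : z ≠ y)
    (h_straight : f (dist x y / 2) (dist x y / 2) (2 * (dist x y / 2)) = -1)
    (h_lower : ∀ b, 0 ≤ b → b ≤ dist x y / 2 + dist o z → -1 ≤ f (dist x y / 2) (dist o z) b) :
    0 ≤ f (dist x y / 2) (dist o z) (dist x z) + f (dist x y / 2) (dist o z) (dist y z) := by
  have hox : dist o x = dist x y / 2 := by rw [dist_comm, ho.1]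
  have hoy : dist o y = dist x y / 2 := by rw [dist_comm, ho.2]
  have hquad := hX o x z y (ho.ne_left hxy) hzo.symm (ho.ne_right hxy) hzx.symm hxy hzy
  rw [hf, hf, hf, hox, hoy, dist_comm z y, show dist y x = 2 * (dist x y / 2) by
    rw [dist_comm]; ring, h_straight, arccos_neg_one, hf_comm (dist o z)] at hquad
  refine add_nonneg_of_arccos_add_arccos_le_pi (h_lower _ dist_nonneg ?_) (h_lower _ dist_nonneg ?_)
    (by linarith)
  · linarith [dist_triangle x o z, ho.1]
  · linarith [dist_triangle y o z, ho.2]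

theorem sq_dist_add_sq_dist_le (hX : CurvGE 0 X) (ho : IsMidpointOf o x y) (z : X) :
    dist x z ^ 2 + dist y z ^ 2 ≤ 2 * (dist x y / 2) ^ 2 + 2 * dist o z ^ 2 := by
  refine ho.dist_induction z (M := fun a p b c => b ^ 2 + c ^ 2 ≤ 2 * a ^ 2 + 2 * p ^ 2)
    (fun p => by linarith) (fun a => by linarith) (fun a => by linarith) (fun a => by linarith) ?_
  intro hxy hzo hzx hzy
  have ha : 0 < dist x y / 2 := half_pos (dist_pos.2 hxy)
  have hp : 0 < dist o z := dist_pos.2 hzo.symm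
  have key := hX.add_nonneg_of_isMidpointOf
    (f := fun a b c => (a ^ 2 + b ^ 2 - c ^ 2) / (2 * a * b)) cmpAngle_zero (fun _ _ _ => by ring) ho hxy hzo hzx hzy ?_ ?_
  · beta_reduce at key
    rw [← add_div, le_div_iff₀ (by positivity)] at key
    linarith
  · rw [div_eq_iff (by positivity)]
    ring
  · intro b hb hbap
    rw [le_div_iff₀ (by positivity)]
    nlinarith

theorem cosh_add_cosh_le (hκ : κ < 0) (hX : CurvGE κ X) (ho : IsMidpointOf o x y) (z : X) :
    cosh (√(-κ) * dist x z) + cosh (√(-κ) * dist y z) ≤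
      2 * cosh (√(-κ) * (dist x y / 2)) * cosh (√(-κ) * dist o z) := by
  set s := √(-κ)
  have hs : 0 < s := sqrt_pos.2 (neg_pos.2 hκ)
  have hdouble (a : ℝ) : cosh (s * (2 * a)) = cosh (s * a) ^ 2 + sinh (s * a) ^ 2 := by
    rw [mul_left_comm, cosh_two_mul]
  refine ho.dist_induction z
    (M := fun a p b c => cosh (s * b) + cosh (s * c) ≤ 2 * cosh (s * a) * cosh (s * p))
    (fun p => by simp only [mul_zero, cosh_zero]; linarith)
    (fun a => by simp only [mul_zero, cosh_zero]; linarith)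
    (fun a => by simp only [mul_zero, cosh_zero, hdouble]; nlinarith [cosh_sq (s * a)])
    (fun a => by simp only [mul_zero, cosh_zero, hdouble]; nlinarith [cosh_sq (s * a)]) ?_
  intro hxy hzo hzx hzy
  have ha : 0 < sinh (s * (dist x y / 2)) := sinh_pos_iff.2 (by positivity [dist_pos.2 hxy])
  have hp : 0 < sinh (s * dist o z) := sinh_pos_iff.2 (by positivity [dist_pos.2 hzo.symm])
  have key := hX.add_nonneg_of_isMidpointOf
    (f := fun a b c => (cosh (s * a) * cosh (s * b) - cosh (s * c)) / (sinh (s * a) * sinh (s * b)))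
    (cmpAngle_of_neg hκ) (fun _ _ _ => by ring) ho hxy hzo hzx hzy ?_ ?_
  · beta_reduce at key
    rw [← add_div, le_div_iff₀ (by positivity)] at key
    linarith
  · rw [hdouble, div_eq_iff (by positivity)]
    ring
  · intro b hb hbap
    have : cosh (s * b) ≤ cosh (s * (dist x y / 2) + s * dist o z) := by
      rw [cosh_le_cosh, abs_of_nonneg (by positivity), abs_of_nonneg (by positivity)]
      nlinarith
    rw [le_div_iff₀ (by positivity)]
    linarith [cosh_add (s * (dist x y / 2)) (s * dist o z)]

theorem two_mul_cos_mul_cos_le (hκ : 0 < κ) (hX : CurvGE κ X) (ho : IsMidpointOf o x y) (z : X)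
    (hr : √κ * (dist x y / 2 + dist o z) ≤ π) :
    2 * cos (√κ * (dist x y / 2)) * cos (√κ * dist o z) ≤
      cos (√κ * dist x z) + cos (√κ * dist y z) := by
  set s := √κ
  have hs : 0 < s := sqrt_pos.2 hκ
  have hdouble (a : ℝ) : cos (s * (2 * a)) = 2 * cos (s * a) ^ 2 - 1 := by
    rw [mul_left_comm, cos_two_mul]
  revert hr
  refine ho.dist_induction z
    (M := fun a p b c =>
      s * (a + p) ≤ π → 2 * cos (s * a) * cos (s * p) ≤ cos (s * b) + cos (s * c))
    (fun p _ => by simp only [mul_zero, cos_zero]; linarith)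
    (fun a _ => by simp only [mul_zero, cos_zero]; linarith)
    (fun a _ => by simp only [mul_zero, cos_zero, hdouble]; linarith)
    (fun a _ => by simp only [mul_zero, cos_zero, hdouble]; linarith) ?_
  intro hxy hzo hzx hzy hr
  have ha₀ : 0 < s * (dist x y / 2) := by positivity [dist_pos.2 hxy]
  have hp₀ : 0 < s * dist o z := by positivity [dist_pos.2 hzo.symm]
  have ha : 0 < sin (s * (dist x y / 2)) := sin_pos_of_pos_of_lt_pi ha₀ (by nlinarith)
  have hp : 0 < sin (s * dist o z) := sin_pos_of_pos_of_lt_pi hp₀ (by nlinarith)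
  have key := hX.add_nonneg_of_isMidpointOf
    (f := fun a b c => (cos (s * c) - cos (s * a) * cos (s * b)) / (sin (s * a) * sin (s * b)))
    (cmpAngle_of_pos hκ) (fun _ _ _ => by ring) ho hxy hzo hzx hzy ?_ ?_
  · beta_reduce at key
    rw [← add_div, le_div_iff₀ (by positivity)] at key
    linarith
  · rw [hdouble, div_eq_iff (by positivity)]
    linear_combination sin_sq_add_cos_sq (s * (dist x y / 2))
  · intro b hb hbap
    have : cos (s * (dist x y / 2) + s * dist o z) ≤ cos (s * b) :=
      cos_le_cos_of_nonneg_of_le_pi (by positivity) (by linarith) (by nlinarith)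
    rw [le_div_iff₀ (by positivity)]
    linarith [cos_add (s * (dist x y / 2)) (s * dist o z)]

theorem half_dist_le_dist_midpoints (hX : CurvGE 0 X) (hm₂ : IsMidpointOf m₂ x₁ x₃)
    (hm₃ : IsMidpointOf m₃ x₁ x₂) : dist x₂ x₃ / 2 ≤ dist m₂ m₃ := by
  have h₁ := hX.sq_dist_add_sq_dist_le hm₃ x₃
  have h₂ := hX.sq_dist_add_sq_dist_le hm₂ m₃
  rw [hm₃.1, dist_comm x₃ m₃] at h₂
  nlinarith [dist_nonneg (x := m₂) (y := m₃), dist_nonneg (x := x₂) (y := x₃)]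

theorem half_dist_le_dist_midpoints_of_pos (hκ : 0 < κ) (hX : CurvGE κ X)
    (hm₂ : IsMidpointOf m₂ x₁ x₃) (hm₃ : IsMidpointOf m₃ x₁ x₂) (h₁₂ : √κ * dist x₁ x₂ ≤ 1)
    (h₁₃ : √κ * dist x₁ x₃ ≤ 1) : dist x₂ x₃ / 2 ≤ dist m₂ m₃ := by
  have hs : 0 < √κ := sqrt_pos.2 hκ
  have hp : dist m₃ x₃ ≤ dist x₁ x₂ / 2 + dist x₁ x₃ := by
    linarith [dist_triangle m₃ x₁ x₃, hm₃.1, dist_comm m₃ x₁]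
  have hq : dist m₂ m₃ ≤ dist x₁ x₃ / 2 + dist x₁ x₂ / 2 := by
    linarith [dist_triangle m₂ x₁ m₃, hm₂.1, hm₃.1, dist_comm m₂ x₁]
  have h₁ := hX.two_mul_cos_mul_cos_le hκ hm₃ x₃ (by nlinarith [pi_gt_three])
  have h₂ := hX.two_mul_cos_mul_cos_le hκ hm₂ m₃ (by nlinarith [pi_gt_three])
  rw [hm₃.1, dist_comm x₃ m₃] at h₂
  have key := le_of_cos_median_ineqs (γ := √κ * (dist x₂ x₃ / 2)) (by positivity) (by positivity)
    (by nlinarith [pi_gt_three]) (by nlinarith [dist_triangle_right x₁ x₂ x₃])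
    (by nlinarith [dist_triangle x₁ x₂ x₃]) (by nlinarith [dist_triangle_left x₂ x₃ x₁])
    (by positivity) (by convert h₁ using 3 <;> ring) h₂
  exact le_of_mul_le_mul_left key hs

theorem half_dist_mul_le_dist_midpoints_of_neg (hκ : κ < 0) (hX : CurvGE κ X)
    (hm₂ : IsMidpointOf m₂ x₁ x₃) (hm₃ : IsMidpointOf m₃ x₁ x₂) (h₁₂ : √(-κ) * dist x₁ x₂ ≤ 1)
    (h₁₃ : √(-κ) * dist x₁ x₃ ≤ 1) :
    dist x₂ x₃ / 2 * (1 - (√(-κ) * (dist x₁ x₂ / 2) + √(-κ) * (dist x₁ x₃ / 2)) ^ 2) ≤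
      dist m₂ m₃ := by
  have hs : 0 < √(-κ) := sqrt_pos.2 (neg_pos.2 hκ)
  have h₁ := hX.cosh_add_cosh_le hκ hm₃ x₃
  have h₂ := hX.cosh_add_cosh_le hκ hm₂ m₃
  rw [hm₃.1, dist_comm x₃ m₃] at h₂
  have key := mul_one_sub_sq_le_of_cosh_median_ineqs (γ := √(-κ) * (dist x₂ x₃ / 2))
    (by positivity) (by positivity) (by linarith) (by nlinarith [dist_triangle_right x₁ x₂ x₃])
    (by nlinarith [dist_triangle x₁ x₂ x₃]) (by nlinarith [dist_triangle_left x₂ x₃ x₁])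
    (by positivity) (by convert h₁ using 3 <;> ring) h₂
  rw [mul_assoc] at key
  exact le_of_mul_le_mul_left key hs

end CurvGE

/-- The midpoint comparison estimate in spaces of curvature `≥ κ`. -/
theorem midpoint_estimate (κ : ℝ) :
    ∃ A : ℝ, 0 ≤ A ∧ ∃ r : ℝ, 0 < r ∧
      ∀ (X : Type) [MetricSpace X], CompleteSpace X → GeodesicSpace X → CurvGE κ X →
        ∀ x₁ x₂ x₃ m₂ m₃ : X,
          dist x₁ x₂ ≤ r → dist x₁ x₃ ≤ r → dist x₂ x₃ ≤ r →
          ∀ t : ℝ, 0 < t → dist x₁ x₂ ≤ 2 * t → dist x₁ x₃ ≤ 2 * t →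
          IsMidpointOf m₂ x₁ x₃ → IsMidpointOf m₃ x₁ x₂ →
          dist m₂ m₃ ≥ (1 / 2) * dist x₂ x₃ * (1 - A * t ^ 2) := by
  rcases lt_trichotomy κ 0 with hκ | rfl | hκ
  · have hs : 0 < √(-κ) := sqrt_pos.2 (neg_pos.2 hκ)
    refine ⟨-4 * κ, by linarith, 1 / √(-κ), by positivity, ?_⟩
    intro X _ _ _ hX x₁ x₂ x₃ m₂ m₃ h₁₂ h₁₃ _ t _ ht₁₂ ht₁₃ hm₂ hm₃
    have h := hX.half_dist_mul_le_dist_midpoints_of_neg hκ hm₂ hm₃ ((le_div_iff₀' hs).1 h₁₂)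
      ((le_div_iff₀' hs).1 h₁₃)
    have hsum : √(-κ) * (dist x₁ x₂ / 2) + √(-κ) * (dist x₁ x₃ / 2) ≤ 2 * √(-κ) * t := by
      nlinarith
    have hsq : (√(-κ) * (dist x₁ x₂ / 2) + √(-κ) * (dist x₁ x₃ / 2)) ^ 2 ≤ -4 * κ * t ^ 2 := by
      calc _ ≤ (2 * √(-κ) * t) ^ 2 := pow_le_pow_left₀ (by positivity) hsum 2
        _ = -4 * κ * t ^ 2 := by rw [mul_pow, mul_pow, sq_sqrt (neg_nonneg.2 hκ.le)]; ring
    nlinarith [dist_nonneg (x := x₂) (y := x₃)]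
  · refine ⟨0, le_rfl, 1, one_pos, ?_⟩
    intro X _ _ _ hX x₁ x₂ x₃ m₂ m₃ _ _ _ t _ _ _ hm₂ hm₃
    linarith [hX.half_dist_le_dist_midpoints hm₂ hm₃]
  · have hs : 0 < √κ := sqrt_pos.2 hκ
    refine ⟨0, le_rfl, 1 / √κ, by positivity, ?_⟩
    intro X _ _ _ hX x₁ x₂ x₃ m₂ m₃ h₁₂ h₁₃ _ t _ _ _ hm₂ hm₃
    linarith [hX.half_dist_le_dist_midpoints_of_pos hκ hm₂ hm₃ ((le_div_iff₀' hs).1 h₁₂)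
      ((le_div_iff₀' hs).1 h₁₃)]
end
end

section
/- Let X be a complete geodesic metric space that has curvature ≥ 0. Let x₁, x₂, x₃ ∈ X, let m₂ be a midpoint of x₁ and x₃, and let m₃ be a midpoint of x₁ and x₂. Then d(m₂, m₃) ≥ (1/2)·d(x₂, x₃). -/
open Metric MeasureTheory Set

noncomputable section

/-- Real helper: two arccos values summing to at most `π` force the arguments to sum
nonnegatively. -/
lemma arccos_sum_aux (t₁ t₂ : ℝ) (h1 : -1 ≤ t₁) (h1' : t₁ ≤ 1) (h2 : -1 ≤ t₂) (h2' : t₂ ≤ 1)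
    (h : Real.arccos t₁ + Real.arccos t₂ ≤ Real.pi) : 0 ≤ t₁ + t₂ := by
  have harr : Real.arccos t₁ ≤ Real.arccos (-t₂) := by
    rw [Real.arccos_neg]; linarith
  have hcos := Real.cos_le_cos_of_nonneg_of_le_pi (Real.arccos_nonneg t₁)
    (Real.arccos_le_pi (-t₂)) harr
  rw [Real.cos_arccos h1 h1', Real.cos_arccos (by linarith) (by linarith)] at hcos
  linarith

lemma real_step (a c u v : ℝ) (ha : 0 < a) (hc : 0 < c)
    (h : 0 ≤ (a ^ 2 + c ^ 2 - u ^ 2) / (2 * a * c) + (c ^ 2 + a ^ 2 - v ^ 2) / (2 * c * a)) :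
    u ^ 2 + v ^ 2 ≤ 2 * c ^ 2 + 2 * a ^ 2 := by
  have e : (a ^ 2 + c ^ 2 - u ^ 2) / (2 * a * c) + (c ^ 2 + a ^ 2 - v ^ 2) / (2 * c * a)
      = ((a ^ 2 + c ^ 2 - u ^ 2) + (c ^ 2 + a ^ 2 - v ^ 2)) / (2 * a * c) := by
    field_simp
  rw [e] at h
  have hpos : (0:ℝ) < 2 * a * c := by positivity
  have := mul_nonneg h hpos.le
  rw [div_mul_cancel₀ _ hpos.ne'] at this
  linarith

lemma ratio_mem_Icc {X : Type*} [MetricSpace X] (q y z : X)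
    (hy : 0 < dist q y) (hz : 0 < dist q z) :
    -1 ≤ (dist q y ^ 2 + dist q z ^ 2 - dist y z ^ 2) / (2 * dist q y * dist q z) ∧
    (dist q y ^ 2 + dist q z ^ 2 - dist y z ^ 2) / (2 * dist q y * dist q z) ≤ 1 := by
  have hden : (0:ℝ) < 2 * dist q y * dist q z := by positivity
  constructor
  · rw [le_div_iff₀ hden]
    have ht := dist_triangle y q z
    have h1 : dist y q = dist q y := dist_comm y q
    nlinarith [dist_nonneg (x := y) (y := z)]
  · rw [div_le_one hden]
    have h := abs_dist_sub_le y z q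
    have h2 : (dist y q - dist z q) ^ 2 ≤ dist y z ^ 2 := by
      rw [← sq_abs]
      nlinarith [abs_nonneg (dist y q - dist z q), dist_nonneg (x := y) (y := z)]
    have h3 : dist y q = dist q y := dist_comm y q
    have h4 : dist z q = dist q z := dist_comm z q
    nlinarith

/-- The reverse parallelogram inequality at a midpoint, from the quadruple condition. -/
lemma key_ineq {X : Type*} [MetricSpace X] (hcurv : CurvGE 0 X)
    (q x y z : X) (hqx : dist x q = dist x y / 2) (hqy : dist y q = dist x y / 2) :
    dist x z ^ 2 + dist y z ^ 2 ≤ 2 * dist q z ^ 2 + 2 * dist x q ^ 2 := by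
  by_cases hxy : x = y
  · subst hxy
    have h0 : dist x q = 0 := by simpa using hqx
    have hq : q = x := by rw [dist_comm] at h0; exact dist_eq_zero.mp h0
    subst hq
    simp [h0]
    linarith
  by_cases hzx : z = x
  · subst hzx
    rw [dist_self, dist_comm y z, dist_comm q z, hqx]
    have := hqy
    nlinarith [dist_comm z y]
  by_cases hzy : z = y
  · subst hzy
    rw [dist_self, dist_comm q z, hqy, hqx]
    nlinarith
  by_cases hzq : z = q
  · subst hzq
    have e : dist y z = dist x z := by rw [hqy, ← hqx]
    rw [dist_self, e]
    nlinarith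
  -- main case: all four points pairwise distinct
  have hxy0 : 0 < dist x y := dist_pos.mpr hxy
  have hqx' : dist q x = dist x y / 2 := by rw [dist_comm]; exact hqx
  have hqy' : dist q y = dist x y / 2 := by rw [dist_comm]; exact hqy
  have hqx0 : 0 < dist q x := by rw [hqx']; linarith
  have hqy0 : 0 < dist q y := by rw [hqy']; linarith
  have hqnex : q ≠ x := fun h => by rw [h, dist_self] at hqx'; linarith
  have hqney : q ≠ y := fun h => by rw [h, dist_self] at hqy'; linarith
  have hqnez : q ≠ z := fun h => hzq h.symm
  have hc : 0 < dist q z := dist_pos.mpr hqnez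
  have hd := hcurv q x y z hqnex hqney hqnez hxy (fun h => hzx h.symm) (fun h => hzy h.symm)
  have e1 : cmpAngle 0 q x y = Real.pi := by
    rw [cmpAngle, if_pos rfl, hqx', hqy']
    have hr : ((dist x y / 2) ^ 2 + (dist x y / 2) ^ 2 - dist x y ^ 2) /
        (2 * (dist x y / 2) * (dist x y / 2)) = -1 := by
      field_simp; ring
    rw [hr, Real.arccos_neg_one]
  have e2 : cmpAngle 0 q y z =
      Real.arccos ((dist q y ^ 2 + dist q z ^ 2 - dist y z ^ 2) / (2 * dist q y * dist q z)) := by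
    rw [cmpAngle, if_pos rfl]
  have e3 : cmpAngle 0 q z x =
      Real.arccos ((dist q z ^ 2 + dist q x ^ 2 - dist z x ^ 2) / (2 * dist q z * dist q x)) := by
    rw [cmpAngle, if_pos rfl]
  rw [e1, e2, e3] at hd
  obtain ⟨hb1, hb1'⟩ := ratio_mem_Icc q y z hqy0 hc
  obtain ⟨hb2, hb2'⟩ := ratio_mem_Icc q z x hc hqx0
  have hd' : Real.arccos ((dist q y ^ 2 + dist q z ^ 2 - dist y z ^ 2) / (2 * dist q y * dist q z))
      + Real.arccos ((dist q z ^ 2 + dist q x ^ 2 - dist z x ^ 2) / (2 * dist q z * dist q x))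
      ≤ Real.pi := by linarith
  have hsum := arccos_sum_aux _ _ hb1 hb1' hb2 hb2' hd'
  rw [hqx', hqy'] at hsum
  have hstep := real_step (dist x y / 2) (dist q z) (dist y z) (dist z x)
    (by linarith) hc hsum
  rw [dist_comm x z, hqx]
  linarith

/-- The midpoint comparison estimate in spaces of nonnegative curvature. -/
theorem midpoint_estimate_nonneg (X : Type*) [MetricSpace X] [CompleteSpace X]
    (hgeo : GeodesicSpace X) (hcurv : CurvGE 0 X)
    (x₁ x₂ x₃ m₂ m₃ : X) (hm₂ : IsMidpointOf m₂ x₁ x₃) (hm₃ : IsMidpointOf m₃ x₁ x₂) :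
    dist m₂ m₃ ≥ (1 / 2) * dist x₂ x₃ := by
  obtain ⟨h21, h23⟩ := hm₂
  obtain ⟨h31, h32⟩ := hm₃
  have k1 := key_ineq hcurv m₃ x₁ x₂ x₃ h31 h32
  have k2 := key_ineq hcurv m₂ x₁ x₃ m₃ h21 h23
  rw [h31] at k1 k2
  rw [h21] at k2
  have hcm : dist m₃ x₃ = dist x₃ m₃ := dist_comm m₃ x₃
  rw [hcm] at k1
  nlinarith [dist_nonneg (x := m₂) (y := m₃), dist_nonneg (x := x₂) (y := x₃)]
end
end

section
/- Let n ∈ ℕ and let X be an n-dimensional Alexandrov space of curvature ≥ 0. Let f : X → ℝ be a Lipschitz affine function with optimal Lipschitz constant L satisfying 0 < L < ∞, and suppose there is an isometric embedding γ : ℝ → X (a line) such that f(γ(t)) = f(γ(0)) + L·t for all t ∈ ℝ. Then there exist a metric space Z and a surjective isometry Φ : X → Z ×₂ ℝ such that, writing Φ(x) = (z(x), t(x)), one has f(x) = L·t(x) for all x ∈ X. -/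
open Metric MeasureTheory Set

noncomputable section

/-!
Normalize `f` to the `1`-Lipschitz affine function `g = f / L`, for which the given line is a
gradient line: `g` grows with unit slope along it. Limits of rescaled geodesic segments from a
point `x` to far-away points of that line give a gradient ray of `g` from `x`, and likewise a ray
of `-g`; together they form a gradient line through `x`. For a gradient line `ℓ` and any point
`z`, nonnegative curvature makes `s ↦ d(z, ℓ s)² - (s - g z)²` midpoint concave, and the
Lipschitz bound makes it nonnegative, so it is constant: `d(z, ℓ s)² = d(z, ℓ (g z))² +
(s - g z)²`. Hence any two gradient lines are parallel and the map
`x ↦ (ℓₓ 0, g x)` is an isometry onto `Z ×₂ ℝ`, with `Z` the level set `g = 0`.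
-/

open Filter Topology

theorem monotone_of_concave_of_nonneg {w : ℕ → ℝ}
    (hconc : ∀ k, w k + w (k + 2) ≤ 2 * w (k + 1)) (hnonneg : ∀ k, 0 ≤ w k) : Monotone w := by
  refine monotone_nat_of_le_succ fun k => ?_
  by_contra! hlt
  set d := w k - w (k + 1)
  have hdrop : ∀ m, d ≤ w (k + m) - w (k + m + 1) := by
    intro m
    induction m with
    | zero => exact le_rfl
    | succ m ih => have := hconc (k + m); grind
  have hlin : ∀ m : ℕ, w (k + m) ≤ w k - m * d := by
    intro m
    induction m with
    | zero => simp
    | succ m ih => have := hdrop m; push_cast; grind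
  obtain ⟨m, hm⟩ := exists_nat_gt (w k / d)
  rw [div_lt_iff₀ (by grind)] at hm
  linarith [hlin m, hnonneg (k + m)]

theorem eq_of_midpoint_concave_of_nonneg {G : ℝ → ℝ}
    (hconc : ∀ s a, G (s + a) + G (s - a) ≤ 2 * G s) (hnonneg : ∀ s, 0 ≤ G s) (s t : ℝ) :
    G s = G t := by
  have hanti : ∀ s a, G s ≤ G (s - a) := fun s a => by
    have hmono : Monotone fun k : ℕ => G (s - k * a) := by
      refine monotone_of_concave_of_nonneg (fun k => ?_) (fun k => hnonneg _)
      have := hconc (s - (k + 1) * a) a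
      push_cast
      ring_nf at this ⊢
      linarith
    simpa using hmono (Nat.zero_le 1)
  have h₁ := hanti s (s - t)
  have h₂ := hanti t (t - s)
  rw [sub_sub_cancel] at h₁ h₂
  linarith

theorem add_nonneg_of_arccos_add_arccos_le_pi {A B : ℝ} (hA : -1 ≤ A) (hB : -1 ≤ B)
    (h : Real.arccos A + Real.arccos B ≤ Real.pi) : 0 ≤ A + B := by
  by_contra! hlt
  have := Real.arccos_lt_arccos hA (show A < -B by linarith) (by linarith)
  rw [Real.arccos_neg] at this
  linarith

theorem tendsto_div_self_of_le_of_le_add {D : ℝ → ℝ} {c : ℝ} (hlo : ∀ t, t ≤ D t)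
    (hhi : ∀ t, 0 ≤ t → D t ≤ t + c) : Tendsto (fun t => D t / t) atTop (𝓝 1) := by
  have hup : Tendsto (fun t => 1 + c / t) atTop (𝓝 1) := by
    simpa using (tendsto_const_nhds (x := (1 : ℝ))).add
      ((tendsto_const_nhds (x := c)).div_atTop tendsto_id)
  refine tendsto_of_tendsto_of_tendsto_of_le_of_le' tendsto_const_nhds hup ?_ ?_
  all_goals filter_upwards [eventually_gt_atTop 0] with t ht
  · rw [le_div_iff₀ ht, one_mul]; exact hlo t
  · rw [div_le_iff₀ ht, add_mul, div_mul_cancel₀ _ ht.ne', one_mul]; exact hhi t ht.le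

theorem WithLp.prod_dist_eq_sqrt {α β : Type*} [PseudoMetricSpace α] [PseudoMetricSpace β]
    (x y : WithLp 2 (α × β)) : dist x y = √(dist x.fst y.fst ^ 2 + dist x.snd y.snd ^ 2) := by
  rw [WithLp.prod_dist_eq_add (by simp), Real.sqrt_eq_rpow]
  norm_num

section MetricSpace

variable {X : Type*} [MetricSpace X]

theorem neg_one_le_comparison_cos {q x y : X} (hx : q ≠ x) (hy : q ≠ y) :
    -1 ≤ (dist q x ^ 2 + dist q y ^ 2 - dist x y ^ 2) / (2 * dist q x * dist q y) := by
  have hqx := dist_pos.2 hx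
  have hqy := dist_pos.2 hy
  have htri : dist x y ≤ dist q x + dist q y := dist_triangle_left x y q
  rw [le_div_iff₀ (by positivity)]
  nlinarith [dist_nonneg (x := x) (y := y)]

/-- The comparison angles at `m` sum to at most `2π`, and the one between `x` and `y` is `π`;
so those between `y, z` and `z, x` sum to at most `π`, which is the inequality after taking
cosines. -/
theorem CurvGE.dist_sq_add_dist_sq_le (hX : CurvGE 0 X) {m x y : X} {a : ℝ}
    (hmx : dist m x = a) (hmy : dist m y = a) (hxy : dist x y = 2 * a) (z : X) :
    dist z x ^ 2 + dist z y ^ 2 ≤ 2 * dist z m ^ 2 + 2 * a ^ 2 := by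
  rcases eq_or_ne m x with rfl | hmx'
  · obtain rfl : a = 0 := by simpa using hmx.symm
    obtain rfl : m = y := dist_eq_zero.1 (by simpa using hmy)
    linarith
  rcases eq_or_ne z m with rfl | hzm
  · rw [hmx, hmy, dist_self]; linarith
  rcases eq_or_ne z x with rfl | hzx
  · rw [dist_self, hxy, dist_comm, hmx]; linarith
  rcases eq_or_ne z y with rfl | hzy
  · rw [dist_self, dist_comm, hxy, dist_comm, hmy]; linarith
  have ha : 0 < a := hmx ▸ dist_pos.2 hmx'
  have hmy' : m ≠ y := dist_pos.1 (hmy ▸ ha)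
  have hxy' : x ≠ y := dist_pos.1 (by linarith)
  have hangles := hX m x y z hmx' hmy' hzm.symm hxy' hzx.symm hzy.symm
  simp only [cmpAngle, if_true] at hangles
  rw [hmx, hmy, hxy, show (a ^ 2 + a ^ 2 - (2 * a) ^ 2) / (2 * a * a) = -1 by field_simp; ring,
    Real.arccos_neg_one] at hangles
  have hcos := add_nonneg_of_arccos_add_arccos_le_pi (neg_one_le_comparison_cos hmy' hzm.symm)
    (neg_one_le_comparison_cos hzm.symm hmx') (by rw [hmx, hmy]; linarith)
  have hr := dist_pos.2 hzm.symm
  rw [hmx, hmy, mul_right_comm 2 (dist m z), ← add_div, le_div_iff₀ (by positivity),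
    zero_mul] at hcos
  rw [dist_comm z y, dist_comm z m]
  linarith

theorem CurvGE.dist_sq_line_add_le (hX : CurvGE 0 X) {ℓ : ℝ → X} (hℓ : Isometry ℓ) (z : X)
    (s a : ℝ) :
    dist z (ℓ (s + a)) ^ 2 + dist z (ℓ (s - a)) ^ 2 ≤ 2 * dist z (ℓ s) ^ 2 + 2 * a ^ 2 := by
  have := hX.dist_sq_add_dist_sq_le (m := ℓ s) (x := ℓ (s + a)) (y := ℓ (s - a)) (a := |a|)
    (by simp [hℓ.dist_eq]) (by simp [hℓ.dist_eq])
    (by rw [hℓ.dist_eq, Real.dist_eq, add_sub_sub_cancel, ← two_mul, abs_mul, abs_two]) z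
  rwa [sq_abs] at this

theorem abs_sub_le_of_lipschitzWith_one {g : X → ℝ} (hg : LipschitzWith 1 g) (x y : X) :
    |g x - g y| ≤ dist x y := by
  simpa [Real.dist_eq] using hg.dist_le_mul x y

def IsGradientLine (g : X → ℝ) (ℓ : ℝ → X) : Prop :=
  Isometry ℓ ∧ ∀ s, g (ℓ s) = s

/-- Only the values of `ρ` on `[0, ∞)` matter. -/
def IsGradientRay (g : X → ℝ) (x : X) (ρ : ℝ → X) : Prop :=
  ρ 0 = x ∧ (∀ s t, 0 ≤ s → 0 ≤ t → dist (ρ s) (ρ t) = |s - t|) ∧ ∀ s, 0 ≤ s → g (ρ s) = g x + s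

variable {g : X → ℝ}

theorem CurvGE.dist_sq_eq_of_isGradientLine (hX : CurvGE 0 X) (hg : LipschitzWith 1 g)
    {ℓ : ℝ → X} (hℓ : IsGradientLine g ℓ) (z : X) (s : ℝ) :
    dist z (ℓ s) ^ 2 = dist z (ℓ (g z)) ^ 2 + (s - g z) ^ 2 := by
  have hconst := eq_of_midpoint_concave_of_nonneg
    (G := fun s => dist z (ℓ s) ^ 2 - (s - g z) ^ 2)
    (fun s a => by nlinarith [hX.dist_sq_line_add_le hℓ.1 z s a]) (fun s => ?_) s (g z)
  · simp only [sub_self] at hconst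
    linarith
  · have := abs_sub_le_of_lipschitzWith_one hg z (ℓ s)
    rw [hℓ.2] at this
    nlinarith [sq_abs (g z - s), abs_nonneg (g z - s)]

theorem CurvGE.dist_sq_eq_of_isGradientLines (hX : CurvGE 0 X) (hg : LipschitzWith 1 g)
    {ℓ₁ ℓ₂ : ℝ → X} (h₁ : IsGradientLine g ℓ₁) (h₂ : IsGradientLine g ℓ₂) (s t : ℝ) :
    dist (ℓ₁ s) (ℓ₂ t) ^ 2 = dist (ℓ₁ 0) (ℓ₂ 0) ^ 2 + (s - t) ^ 2 := by
  have h₁₂ := hX.dist_sq_eq_of_isGradientLine hg h₁ (ℓ₂ 0) s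
  have h₂₁ := hX.dist_sq_eq_of_isGradientLine hg h₂ (ℓ₁ s) 0
  have h₂₁' := hX.dist_sq_eq_of_isGradientLine hg h₂ (ℓ₁ s) t
  simp only [h₁.2, h₂.2] at h₁₂ h₂₁ h₂₁'
  rw [dist_comm (ℓ₂ 0), dist_comm (ℓ₂ 0)] at h₁₂
  linear_combination h₂₁' - h₂₁ + h₁₂

theorem CurvGE.isGradientLine_eq_of_apply_eq (hX : CurvGE 0 X) (hg : LipschitzWith 1 g)
    {ℓ₁ ℓ₂ : ℝ → X} (h₁ : IsGradientLine g ℓ₁) (h₂ : IsGradientLine g ℓ₂) {t : ℝ}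
    (ht : ℓ₁ t = ℓ₂ t) (s : ℝ) : ℓ₁ s = ℓ₂ s := by
  have hs := hX.dist_sq_eq_of_isGradientLines hg h₁ h₂ s s
  have ht' := hX.dist_sq_eq_of_isGradientLines hg h₁ h₂ t t
  rw [ht, dist_self] at ht'
  simp only [sub_self, zero_pow two_ne_zero, add_zero] at hs ht'
  rw [← dist_eq_zero, ← pow_eq_zero_iff two_ne_zero]
  linarith

theorem exists_isGradientRay_of_tendsto [ProperSpace X] {ι : Type*} {l : Filter ι} [l.NeBot]
    (hg : Continuous g) {x : X} {q : ι → ℝ → X} (hq₀ : ∀ i, q i 0 = x)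
    (hdist : ∀ s t, 0 ≤ s → 0 ≤ t → Tendsto (fun i => dist (q i s) (q i t)) l (𝓝 |s - t|))
    (hgq : ∀ s, 0 ≤ s → ∀ᶠ i in l, g (q i s) = g x + s) : ∃ ρ, IsGradientRay g x ρ := by
  set U := Ultrafilter.of l
  have hU : ↑U ≤ l := Ultrafilter.of_le l
  have hlim : ∀ s, 0 ≤ s → ∃ y, Tendsto (fun i => q i s) U (𝓝 y) := fun s hs => by
    have hball : ∀ᶠ i in l, q i s ∈ closedBall x (s + 1) := by
      have := (hdist 0 s le_rfl hs).eventually (gt_mem_nhds (show |0 - s| < s + 1 by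
        rw [zero_sub, abs_neg, abs_of_nonneg hs]; linarith))
      filter_upwards [this] with i hi
      rw [mem_closedBall, dist_comm, ← hq₀ i]
      exact hi.le
    obtain ⟨y, -, hy⟩ := (isCompact_closedBall x (s + 1)).ultrafilter_le_nhds (U.map _)
      (by rw [Ultrafilter.coe_map, le_principal_iff]; exact hU hball)
    exact ⟨y, hy⟩
  have : Nonempty X := ⟨x⟩
  choose! ρ hρ using hlim
  refine ⟨ρ, ?_, fun s t hs ht => ?_, fun s hs => ?_⟩
  · exact tendsto_nhds_unique (hρ 0 le_rfl) (by simp [hq₀])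
  · exact tendsto_nhds_unique ((hρ s hs).dist (hρ t ht)) ((hdist s t hs ht).mono_left hU)
  · exact tendsto_nhds_unique ((hg.tendsto _).comp (hρ s hs))
      (tendsto_const_nhds.congr' (EventuallyEq.symm (hU (hgq s hs))))

theorem AffineOn.const_smul {V : Type*} [AddCommGroup V] [Module ℝ V] {F : X → V}
    (hF : AffineOn F) (c : ℝ) : AffineOn (c • F) := fun γ hγ t ht => by
  simp only [Pi.smul_apply, hF γ hγ t ht, smul_add, smul_comm c]

/-- The ray is the limit of the geodesic segments from `x` to `δ (g x + t)`, rescaled by `t`;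
along them `g` has slope `1` and the speed tends to `1`. -/
theorem exists_isGradientRay [ProperSpace X] (hgeo : GeodesicSpace X) (hg : LipschitzWith 1 g)
    (haff : AffineOn g) {δ : ℝ → X} (hδ : IsGradientLine g δ) (x : X) :
    ∃ ρ, IsGradientRay g x ρ := by
  choose σ hσ hσ₀ hσ₁ using fun t : ℝ => hgeo x (δ (g x + t))
  set D := fun t => dist x (δ (g x + t))
  have hD : ∀ t, |t| ≤ D t := fun t => by
    simpa [hδ.2, abs_sub_comm] using abs_sub_le_of_lipschitzWith_one hg x (δ (g x + t))
  have hD' : ∀ t, D t ≤ |t| + dist x (δ (g x)) := fun t => by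
    calc D t ≤ dist x (δ (g x)) + dist (δ (g x)) (δ (g x + t)) := dist_triangle _ _ _
      _ = |t| + dist x (δ (g x)) := by rw [hδ.1.dist_eq, Real.dist_eq]; simp [add_comm]
  have hmem : ∀ s, 0 ≤ s → ∀ᶠ t in atTop, 0 < t ∧ s / t ∈ Icc (0 : ℝ) 1 := fun s hs => by
    filter_upwards [eventually_gt_atTop 0, eventually_ge_atTop s] with t ht hst
    exact ⟨ht, div_nonneg hs ht.le, (div_le_one ht).2 hst⟩
  refine exists_isGradientRay_of_tendsto (l := atTop) hg.continuous (q := fun t s => σ t (s / t))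
    (fun t => by simp [hσ₀]) (fun s s' hs hs' => ?_) (fun s hs => ?_)
  · have hratio := tendsto_div_self_of_le_of_le_add (fun t => (le_abs_self t).trans (hD t))
      (fun t ht => by simpa [abs_of_nonneg ht] using hD' t)
    have hlim := hratio.const_mul |s - s'|
    rw [mul_one] at hlim
    refine hlim.congr' ?_
    filter_upwards [hmem s hs, hmem s' hs'] with t ⟨ht, hst⟩ ⟨_, hst'⟩
    rw [hσ t _ hst _ hst', hσ₀, hσ₁, ← sub_div, abs_div, abs_of_pos ht]
    ring
  · filter_upwards [hmem s hs] with t ⟨ht, hst⟩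
    have := haff (σ t) (hσ t) _ hst
    rw [hσ₀, hσ₁, hδ.2, smul_eq_mul, smul_eq_mul] at this
    rw [this]
    field_simp
    ring

theorem IsGradientRay.dist_eq_add (hg : LipschitzWith 1 g) {x : X} {ρ₁ ρ₂ : ℝ → X}
    (h₁ : IsGradientRay g x ρ₁) (h₂ : IsGradientRay (-g) x ρ₂) {s t : ℝ} (hs : 0 ≤ s)
    (ht : 0 ≤ t) : dist (ρ₁ s) (ρ₂ t) = s + t := by
  refine le_antisymm ?_ ?_
  · have e₁ : dist (ρ₁ s) x = s := by simpa [h₁.1, abs_of_nonneg hs] using h₁.2.1 s 0 hs le_rfl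
    have e₂ : dist x (ρ₂ t) = t := by simpa [h₂.1, abs_of_nonneg ht] using h₂.2.1 0 t le_rfl ht
    linarith [dist_triangle (ρ₁ s) x (ρ₂ t)]
  · have hρ₂ : g (ρ₂ t) = g x - t := by
      have := h₂.2.2 t ht
      simp only [Pi.neg_apply] at this
      linarith
    calc s + t = |g (ρ₁ s) - g (ρ₂ t)| := by
          rw [h₁.2.2 s hs, hρ₂, show g x + s - (g x - t) = s + t by ring,
            abs_of_nonneg (by linarith)]
      _ ≤ dist (ρ₁ s) (ρ₂ t) := abs_sub_le_of_lipschitzWith_one hg _ _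

theorem exists_isGradientLine_of_rays (hg : LipschitzWith 1 g) {x : X} {ρ₁ ρ₂ : ℝ → X}
    (h₁ : IsGradientRay g x ρ₁) (h₂ : IsGradientRay (-g) x ρ₂) :
    ∃ ℓ, IsGradientLine g ℓ ∧ ℓ (g x) = x := by
  set ℓ := fun u => if g x ≤ u then ρ₁ (u - g x) else ρ₂ (g x - u)
  have hgℓ : ∀ u, g (ℓ u) = u := fun u => by
    by_cases hu : g x ≤ u
    · simp [ℓ, hu, h₁.2.2 _ (sub_nonneg.2 hu)]
    · have := h₂.2.2 (g x - u) (by linarith)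
      simp only [Pi.neg_apply] at this
      simp only [ℓ, hu, if_false]
      linarith
  refine ⟨ℓ, ⟨Isometry.of_dist_eq fun u v => ?_, hgℓ⟩, by simp [ℓ, h₁.1]⟩
  rw [Real.dist_eq]
  simp only [ℓ]
  split_ifs with hu hv hv
  · rw [h₁.2.1 _ _ (by linarith) (by linarith), sub_sub_sub_cancel_right]
  · rw [h₁.dist_eq_add hg h₂ (by linarith) (by linarith), abs_of_nonneg (by linarith)]
    ring
  · rw [dist_comm, h₁.dist_eq_add hg h₂ (by linarith) (by linarith), abs_of_neg (by linarith)]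
    ring
  · rw [h₂.2.1 _ _ (by linarith) (by linarith), sub_sub_sub_cancel_left, abs_sub_comm]

theorem exists_isGradientLine [ProperSpace X] (hgeo : GeodesicSpace X) (hg : LipschitzWith 1 g)
    (haff : AffineOn g) {δ : ℝ → X} (hδ : IsGradientLine g δ) (x : X) :
    ∃ ℓ, IsGradientLine g ℓ ∧ ℓ (g x) = x := by
  obtain ⟨ρ₁, h₁⟩ := exists_isGradientRay hgeo hg haff hδ x
  obtain ⟨ρ₂, h₂⟩ := exists_isGradientRay hgeo hg.neg (by simpa using haff.const_smul (-1))
    ⟨hδ.1.comp (IsometryEquiv.neg ℝ).isometry, fun t => by simp [hδ.2]⟩ x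
  exact exists_isGradientLine_of_rays hg h₁ h₂

theorem IsLip.abs_sub_le_lipConst_mul {f : X → ℝ} (hf : IsLip f) (x y : X) :
    |f x - f y| ≤ lipConst f * dist x y := by
  rcases eq_or_ne x y with rfl | hxy
  · simp
  have hd := dist_pos.2 hxy
  rw [← div_le_iff₀ hd]
  exact le_csInf hf fun L hL => (div_le_iff₀ hd).2 (hL.2 x y)

end MetricSpace

/-- The Kuratowski embedding of `Y` makes `Z` a type in the lowest universe. -/
theorem exists_isometry_withLp_prod {X Y : Type*} [MetricSpace X] [MetricSpace Y]
    [TopologicalSpace.SeparableSpace Y] (p : X → Y) (g : X → ℝ)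
    (hdist : ∀ x y, dist x y ^ 2 = dist (p x) (p y) ^ 2 + (g x - g y) ^ 2)
    (hfib : ∀ x t, ∃ y, p y = p x ∧ g y = t) :
    ∃ (Z : Type) (_ : MetricSpace Z) (Φ : X → WithLp 2 (Z × ℝ)),
      Isometry Φ ∧ Function.Surjective Φ ∧ ∀ x, (WithLp.equiv 2 (Z × ℝ) (Φ x)).2 = g x := by
  set e := kuratowskiEmbedding Y
  refine ⟨range (e ∘ p), inferInstance, fun x => WithLp.toLp 2 (⟨e (p x), mem_range_self x⟩, g x),
    Isometry.of_dist_eq fun x y => (WithLp.prod_dist_eq_sqrt _ _).trans ?_, ?_, fun x => rfl⟩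
  · change √(dist (e (p x)) (e (p y)) ^ 2 + dist (g x) (g y) ^ 2) = dist x y
    rw [(kuratowskiEmbedding.isometry Y).dist_eq, Real.dist_eq, sq_abs, ← hdist,
      Real.sqrt_sq dist_nonneg]
  · rintro ⟨⟨⟨_, x, rfl⟩, t⟩⟩
    obtain ⟨y, hpy, rfl⟩ := hfib x t
    exact ⟨y, by simp [hpy]⟩

/-- Splitting off a line: if a Lipschitz affine function on a nonnegatively
curved Alexandrov space attains its optimal Lipschitz constant `L > 0` along a line, then the
space splits as an `ℓ²`-product `Z ×₂ ℝ` and `f` is `L` times the second coordinate. -/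
theorem line_splitting (n : ℕ) (X : Type*) [MetricSpace X] (hX : IsAlexandrov n 0 X)
    (f : X → ℝ) (hlip : IsLip f) (haff : AffineOn f)
    (L : ℝ) (hL : L = lipConst f) (hLpos : 0 < L)
    (γ : ℝ → X) (hγ : Isometry γ) (hfγ : ∀ t : ℝ, f (γ t) = f (γ 0) + L * t) :
    ∃ (Z : Type) (_ : MetricSpace Z) (Φ : X → WithLp 2 (Z × ℝ)),
      Isometry Φ ∧ Function.Surjective Φ ∧
      ∀ x : X, f x = L * ((WithLp.equiv 2 (Z × ℝ)) (Φ x)).2 := by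
  obtain ⟨-, _, hgeo, -, hcurv⟩ := hX
  set g := L⁻¹ • f with hg_def
  have hg : LipschitzWith 1 g := LipschitzWith.of_dist_le_mul fun x y => by
    rw [hg_def, Real.dist_eq, Pi.smul_apply, Pi.smul_apply, ← smul_sub, smul_eq_mul, abs_mul,
      abs_of_pos (inv_pos.2 hLpos), inv_mul_le_iff₀ hLpos, NNReal.coe_one, one_mul, hL]
    exact hlip.abs_sub_le_lipConst_mul x y
  have hδ : IsGradientLine g fun t => γ (t - f (γ 0) / L) :=
    ⟨hγ.comp (IsometryEquiv.subRight _).isometry, fun t => by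
      rw [hg_def, Pi.smul_apply, smul_eq_mul, hfγ]; field_simp; ring⟩
  choose ℓ hℓ hℓx using exists_isGradientLine hgeo hg (haff.const_smul L⁻¹) hδ
  have : TopologicalSpace.SeparableSpace X := by
    have := secondCountable_of_proper (α := X); infer_instance
  have hdist : ∀ x y, dist x y ^ 2 = dist (ℓ x 0) (ℓ y 0) ^ 2 + (g x - g y) ^ 2 := fun x y => by
    simpa [hℓx] using hcurv.dist_sq_eq_of_isGradientLines hg (hℓ x) (hℓ y) (g x) (g y)
  have hproj : ∀ x t, ℓ (ℓ x t) 0 = ℓ x 0 := fun x t =>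
    hcurv.isGradientLine_eq_of_apply_eq hg (hℓ _) (hℓ x) (by simpa [(hℓ x).2] using hℓx (ℓ x t)) 0
  obtain ⟨Z, _, Φ, hΦ, hsurj, hΦg⟩ := exists_isometry_withLp_prod (fun x => ℓ x 0) g hdist
    fun x t => ⟨ℓ x t, hproj x t, (hℓ x).2 t⟩
  refine ⟨Z, _, Φ, hΦ, hsurj, fun x => ?_⟩
  rw [hΦg]
  simp only [hg_def, Pi.smul_apply, smul_eq_mul]
  field_simp
end
end

section
/- Let n, k ∈ ℕ and let X be an n-dimensional Alexandrov space of curvature ≥ 0. Let F : X → ℝᵏ be a 1-Lipschitz affine map with coordinate functions F₁, …, F_k, and suppose there exist a point x ∈ X and isometric embeddings γ₁, …, γ_k : ℝ → X (lines) with γᵢ(0) = x and Fᵢ(γᵢ(t)) = Fᵢ(x) + t for all t ∈ ℝ and all i. Then there exist a metric space Z and a surjective isometry Φ : X → Z ×₂ ℝᵏ such that, writing Φ(y) = (z(y), v(y)), one has F(y) = v(y) for all y ∈ X. -/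
open Metric MeasureTheory Set

noncomputable section

/-!
Let `g` be `1`-Lipschitz and `ℓ` a line along which `g` grows with slope one. For curvature `≥ 0`
the quadruple condition, applied at a point of `ℓ` between two others, makes
`t ↦ d(y, ℓ t)² - t²` concave; since `g` bounds it below by a linear function it is affine:
`d(y, ℓ t)² = d(y, ℓ 0)² - 2 (g y - g (ℓ 0)) t + t²`.

Letting `t → -∞`, two points at distance `t` from `z` on which `g` has grown by almost `t` both
see `ℓ (-∞)` from `z` under a comparison angle close to `π`, hence each other under a small one.
Along geodesics towards `ℓ (+∞)`, on which `g` is affine, such points exist, so completeness gives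
for every `t` a unique point at distance `|t|` from `z` where `g` has grown by `t`: these points
form a line through `z` along which `g` has slope one.

Moving every point along such lines until all coordinates of `F` equal those of `F x` gives a
map `P` onto the fibre of `x`, and the distance formula above yields
`d(y, z)² = d(P y, P z)² + |F y - F z|²`; so `y ↦ (P y, F y)` is the splitting.
-/

open Filter Topology

lemma ConcaveOn.le_of_bddBelow {f : ℝ → ℝ} (hf : ConcaveOn ℝ univ f) (hb : BddBelow (range f))
    (x y : ℝ) : f x ≤ f y := by
  obtain ⟨m, hm⟩ := hb
  have hm : ∀ t, m ≤ f t := fun t => hm (mem_range_self t)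
  by_contra! hyx
  have hxm : 0 < f x - m := by linarith [hm y]
  -- `y` is the convex combination `(1 - ε) x + ε z` of `x` and a far point `z`.
  set ε := (f x - f y) / (2 * (f x - m))
  have hε : 0 < ε := by positivity
  have hε1 : ε ≤ 1 / 2 := by
    rw [div_le_div_iff₀ (by positivity) two_pos]; linarith [hm y]
  have h := hf.2 (mem_univ x) (mem_univ (x + (y - x) / ε)) (by linarith : 0 ≤ 1 - ε) hε.le
    (by ring)
  rw [show (1 - ε) • x + ε • (x + (y - x) / ε) = y by simp only [smul_eq_mul]; field_simp; ring,
    smul_eq_mul, smul_eq_mul] at h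
  have hεm : ε * (f x - m) = (f x - f y) / 2 := by simp only [ε]; field_simp
  nlinarith [hm (x + (y - x) / ε)]

lemma ConcaveOn.eq_of_bddBelow {f : ℝ → ℝ} (hf : ConcaveOn ℝ univ f) (hb : BddBelow (range f))
    (x y : ℝ) : f x = f y :=
  le_antisymm (hf.le_of_bddBelow hb x y) (hf.le_of_bddBelow hb y x)

section Euclidean

variable {ι : Type*} [Fintype ι]

lemma EuclideanSpace.sq_dist_eq_sum (v w : EuclideanSpace ℝ ι) :
    dist v w ^ 2 = ∑ i, (v i - w i) ^ 2 := by
  rw [EuclideanSpace.dist_eq, Real.sq_sqrt (by positivity)]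
  simp [Real.dist_eq, sq_abs]

lemma EuclideanSpace.apply_eq_of_dist_le_abs {v w : EuclideanSpace ℝ ι} {i j : ι}
    (hji : j ≠ i) (h : dist v w ≤ |v i - w i|) : v j = w j := by
  classical
  have hsq : dist v w ^ 2 ≤ (v i - w i) ^ 2 :=
    (pow_le_pow_left₀ dist_nonneg h 2).trans_eq (sq_abs _)
  have hpair : (v i - w i) ^ 2 + (v j - w j) ^ 2 ≤ dist v w ^ 2 := by
    rw [EuclideanSpace.sq_dist_eq_sum, ← Finset.sum_pair (f := fun l => (v l - w l) ^ 2) hji.symm]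
    exact Finset.sum_le_sum_of_subset_of_nonneg (Finset.subset_univ _) fun _ _ _ => sq_nonneg _
  nlinarith [sq_nonneg (v j - w j)]

end Euclidean

section Metric

variable {X : Type*} [MetricSpace X]

/-- The cosine of the Euclidean comparison angle `∠̃₀(q; x, y)` (junk value `0` when
`q ∈ {x, y}`). -/
def cmpCos (q x y : X) : ℝ :=
  (dist q x ^ 2 + dist q y ^ 2 - dist x y ^ 2) / (2 * dist q x * dist q y)

lemma cmpAngle_zero_s13 (q x y : X) : cmpAngle 0 q x y = Real.arccos (cmpCos q x y) := by
  simp [cmpAngle, cmpCos]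

lemma cmpCos_mem_Icc (q x y : X) : cmpCos q x y ∈ Icc (-1 : ℝ) 1 := by
  rcases (dist_nonneg : 0 ≤ dist q x).eq_or_lt with hx | hx
  · simp [cmpCos, ← hx]
  rcases (dist_nonneg : 0 ≤ dist q y).eq_or_lt with hy | hy
  · simp [cmpCos, ← hy]
  have hden : 0 < 2 * dist q x * dist q y := by positivity
  have h₁ : dist x y ≤ dist q x + dist q y := dist_triangle_left x y q
  have h₂ : |dist q x - dist q y| ≤ dist x y := by
    simpa only [dist_comm q] using abs_dist_sub_le x y q
  have h₃ := sq_abs (dist q x - dist q y) ▸ pow_le_pow_left₀ (abs_nonneg _) h₂ 2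
  constructor
  · rw [cmpCos, le_div_iff₀ hden]; nlinarith [dist_nonneg (x := x) (y := y)]
  · rw [cmpCos, div_le_iff₀ hden]; nlinarith

lemma cmpCos_comm (q x y : X) : cmpCos q x y = cmpCos q y x := by
  simp only [cmpCos, dist_comm x y]; ring_nf

lemma cmpCos_self_right {q x : X} (hx : q ≠ x) : cmpCos q x x = 1 := by
  have := dist_pos.2 hx
  rw [cmpCos, dist_self]; field_simp; ring

/-- If `q` lies between `a` and `b`, then `∠̃(q; a, b) = π`, so the quadruple condition leaves at
most `π` for `∠̃(q; a, z) + ∠̃(q; z, b)`. -/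
lemma CurvGE.cmpCos_add_cmpCos_nonneg (hX : CurvGE 0 X) {a q b : X} (z : X)
    (hab : dist a b = dist a q + dist q b) (ha : q ≠ a) (hb : q ≠ b) :
    0 ≤ cmpCos q a z + cmpCos q b z := by
  have hqa : 0 < dist q a := dist_pos.2 ha
  have hqb : 0 < dist q b := dist_pos.2 hb
  have hstraight : cmpCos q a b = -1 := by
    rw [cmpCos, hab, dist_comm a q]; field_simp; ring
  by_cases hzq : z = q
  · simp [hzq, cmpCos]
  by_cases hza : z = a
  · rw [hza, cmpCos_self_right ha, cmpCos_comm, hstraight]; norm_num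
  by_cases hzb : z = b
  · rw [hzb, cmpCos_self_right hb, hstraight]; norm_num
  have hne : a ≠ b := by rintro rfl; rw [dist_self, dist_comm] at hab; linarith
  have hquad := hX q a z b ha (Ne.symm hzq) hb (Ne.symm hza) hne hzb
  rw [cmpAngle_zero_s13, cmpAngle_zero_s13, cmpAngle_zero_s13, cmpCos_comm q b a, hstraight,
    Real.arccos_neg_one] at hquad
  have hle : Real.arccos (cmpCos q a z) ≤ Real.arccos (-cmpCos q z b) := by
    rw [Real.arccos_neg]; linarith
  have hz := cmpCos_mem_Icc q z b
  rw [Real.strictAntiOn_arccos.le_iff_ge (cmpCos_mem_Icc q a z) ⟨by linarith [hz.2], by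
    linarith [hz.1]⟩] at hle
  rw [cmpCos_comm q b z]; linarith

/-- Stewart's theorem becomes an inequality under curvature `≥ 0`. -/
lemma CurvGE.stewart_le (hX : CurvGE 0 X) {a q b : X} (z : X)
    (hab : dist a b = dist a q + dist q b) (ha : q ≠ a) (hb : q ≠ b) :
    dist q b * dist z a ^ 2 + dist a q * dist z b ^ 2 ≤
      dist a b * (dist z q ^ 2 + dist a q * dist q b) := by
  have hqa : 0 < dist q a := dist_pos.2 ha
  have hqb : 0 < dist q b := dist_pos.2 hb
  by_cases hzq : z = q
  · subst hzq; rw [hab, dist_comm z a, dist_self]; ring_nf; rfl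
  have hqz : 0 < dist q z := dist_pos.2 (Ne.symm hzq)
  have hsum : cmpCos q a z + cmpCos q b z =
      (dist q b * (dist q a ^ 2 + dist q z ^ 2 - dist a z ^ 2) +
        dist q a * (dist q b ^ 2 + dist q z ^ 2 - dist b z ^ 2)) /
      (2 * dist q a * dist q b * dist q z) := by
    rw [cmpCos, cmpCos]; field_simp
  have h := hX.cmpCos_add_cmpCos_nonneg z hab ha hb
  rw [hsum, le_div_iff₀ (by positivity), zero_mul] at h
  rw [hab, dist_comm a q, dist_comm z q, dist_comm z a, dist_comm z b]
  linarith

lemma CurvGE.concaveOn_sq_dist_sub_sq (hX : CurvGE 0 X) {ℓ : ℝ → X} (hℓ : Isometry ℓ) (z : X) :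
    ConcaveOn ℝ univ (fun t => dist z (ℓ t) ^ 2 - t ^ 2) := by
  refine concaveOn_of_slope_anti_adjacent convex_univ fun {s t u} _ _ hst htu => ?_
  have hd : ∀ {a b}, a ≤ b → dist (ℓ a) (ℓ b) = b - a := fun hab => by
    rw [hℓ.dist_eq, Real.dist_eq, abs_sub_comm, abs_of_nonneg (sub_nonneg.2 hab)]
  have hsu := hd (a := s) (b := u) (by linarith)
  have h := hX.stewart_le (a := ℓ s) (q := ℓ t) (b := ℓ u) z
    (by rw [hsu, hd hst.le, hd htu.le]; ring) (hℓ.injective.ne hst.ne') (hℓ.injective.ne htu.ne)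
  rw [hsu, hd hst.le, hd htu.le] at h
  rw [div_le_div_iff₀ (by linarith) (by linarith)]
  linarith

lemma LipschitzWith.abs_sub_le {g : X → ℝ} (hg : LipschitzWith 1 g) (a b : X) :
    |g a - g b| ≤ dist a b := by
  simpa [Real.dist_eq] using hg.dist_le_mul a b

def IsSlopeLine (g : X → ℝ) (z : X) (ℓ : ℝ → X) : Prop :=
  Isometry ℓ ∧ ℓ 0 = z ∧ ∀ t, g (ℓ t) = g z + t

/-- `t ↦ d(y, ℓ t)² - t² + 2 (g y - g z) t` is concave and bounded below by `(g y - g z)²`,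
hence constant. -/
lemma IsSlopeLine.sq_dist (hX : CurvGE 0 X) {g : X → ℝ} (hg : LipschitzWith 1 g) {z : X}
    {ℓ : ℝ → X} (hℓ : IsSlopeLine g z ℓ) (y : X) (t : ℝ) :
    dist y (ℓ t) ^ 2 = dist y z ^ 2 - 2 * (g y - g z) * t + t ^ 2 := by
  set c := g y - g z
  have hconc : ConcaveOn ℝ univ (fun t => dist y (ℓ t) ^ 2 - t ^ 2 + 2 * c * t) :=
    (hX.concaveOn_sq_dist_sub_sq hℓ.1 y).add
      ((LinearMap.mulLeft ℝ (2 * c)).concaveOn convex_univ)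
  have hlow : ∀ t, c ^ 2 ≤ dist y (ℓ t) ^ 2 - t ^ 2 + 2 * c * t := fun t => by
    have h := hg.abs_sub_le y (ℓ t)
    rw [hℓ.2.2, show g y - (g z + t) = c - t by ring] at h
    nlinarith [sq_abs (c - t), abs_nonneg (c - t)]
  have h := hconc.eq_of_bddBelow ⟨c ^ 2, by rintro _ ⟨t, rfl⟩; exact hlow t⟩ t 0
  simp only [hℓ.2.1] at h
  linarith

lemma cmpCos_add_one_le {z p q : X} (hp : 0 < dist z p) (hq : 0 < dist z q) :
    cmpCos z p q + 1 ≤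
      (dist z p + dist z q - dist p q) * (1 / dist z p + 1 / dist z q) := by
  have h₁ : dist p q ≤ dist z p + dist z q := dist_triangle_left p q z
  rw [cmpCos, div_add_one (by positivity), div_le_iff₀ (by positivity)]
  field_simp
  nlinarith [sq_nonneg (dist z p + dist z q - dist p q), dist_nonneg (x := p) (y := q)]

lemma CurvGE.sq_dist_le_of_cmpCos_le (hX : CurvGE 0 X) {z p p' q : X} {t s : ℝ} (ht : 0 < t)
    (hp : dist z p = t) (hp' : dist z p' = t) (hq : z ≠ q)
    (hpq : cmpCos z p q ≤ -1 + s) (hp'q : cmpCos z p' q ≤ -1 + s) :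
    dist p p' ^ 2 ≤ 8 * t ^ 2 * s := by
  have hs : 0 ≤ s := by linarith [(cmpCos_mem_Icc z p q).1]
  have hpp' : dist p p' ≤ 2 * t := by linarith [dist_triangle_left p p' z]
  rcases lt_or_ge 1 s with hs1 | hs1
  · nlinarith [dist_nonneg (x := p) (y := p')]
  by_cases he : p = p'
  · rw [he, dist_self, zero_pow two_ne_zero]; positivity
  have hzp : z ≠ p := dist_pos.1 (hp ▸ ht)
  have hzp' : z ≠ p' := dist_pos.1 (hp' ▸ ht)
  have hpq' : p ≠ q := by rintro rfl; rw [cmpCos_self_right hzp] at hpq; linarith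
  have hp'q' : p' ≠ q := by rintro rfl; rw [cmpCos_self_right hzp'] at hp'q; linarith
  have hquad := hX z p p' q hzp hzp' hq he hpq' hp'q'
  rw [cmpAngle_zero_s13, cmpAngle_zero_s13, cmpAngle_zero_s13, cmpCos_comm z q p] at hquad
  -- Both angles towards `q` are at least `π - β`, so the angle between `p` and `p'` is at most
  -- `2β`.
  set β := Real.arccos (1 - s)
  have hβ : Real.arccos (-1 + s) = Real.pi - β := by
    rw [show -1 + s = -(1 - s) by ring, Real.arccos_neg]
  have h₁ := Real.arccos_le_arccos hpq
  have h₂ := Real.arccos_le_arccos hp'q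
  have hβ2 : β ≤ Real.pi / 2 := Real.arccos_le_pi_div_two.2 (by linarith)
  have hcos := Real.cos_le_cos_of_nonneg_of_le_pi (Real.arccos_nonneg _) (by linarith)
    (show Real.arccos (cmpCos z p p') ≤ 2 * β by linarith)
  have hI := cmpCos_mem_Icc z p p'
  rw [Real.cos_arccos hI.1 hI.2, Real.cos_two_mul, Real.cos_arccos (by linarith) (by linarith),
    cmpCos, hp, hp', le_div_iff₀ (by positivity)] at hcos
  nlinarith

lemma CurvGE.sq_dist_le_of_excess (hX : CurvGE 0 X) {z p p' q : X} {t : ℝ} (ht : 0 < t)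
    (hp : dist z p = t) (hp' : dist z p' = t) (hq : 0 < dist z q) :
    dist p p' ^ 2 ≤ 8 * t ^ 2 *
      (((t + dist z q - dist p q) + (t + dist z q - dist p' q)) * (1 / t + 1 / dist z q)) := by
  have he : 0 ≤ t + dist z q - dist p q := by linarith [dist_triangle_left p q z]
  have he' : 0 ≤ t + dist z q - dist p' q := by linarith [dist_triangle_left p' q z]
  have hw : 0 ≤ 1 / t + 1 / dist z q := by positivity
  have hc := cmpCos_add_one_le (p := p) (hp ▸ ht) hq
  have hc' := cmpCos_add_one_le (p := p') (hp' ▸ ht) hq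
  rw [hp] at hc
  rw [hp'] at hc'
  exact hX.sq_dist_le_of_cmpCos_le ht hp hp' (dist_pos.1 hq) (by nlinarith) (by nlinarith)

lemma AffineOn.neg {g : X → ℝ} (haff : AffineOn g) : AffineOn (-g) :=
  fun σ hσ t ht => by simp only [Pi.neg_apply, haff σ hσ t ht, smul_eq_mul]; ring

lemma IsSlopeLine.neg {g : X → ℝ} {z : X} {ℓ : ℝ → X} (hℓ : IsSlopeLine g z ℓ) :
    IsSlopeLine (-g) z (fun t => ℓ (-t)) := by
  refine ⟨hℓ.1.comp isometry_neg, by simp [hℓ.2.1], fun t => ?_⟩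
  simp only [Pi.neg_apply, hℓ.2.2]; ring

lemma IsSlopeLine.tendsto_dist_sub (hX : CurvGE 0 X) {g : X → ℝ} (hg : LipschitzWith 1 g)
    {z : X} {ℓ : ℝ → X} (hℓ : IsSlopeLine g z ℓ) (y : X) :
    Tendsto (fun S => dist y (ℓ S) - S) atTop (𝓝 (g z - g y)) := by
  set b := g y - g z
  set E := dist y z ^ 2 - b ^ 2
  have hlow : ∀ S, S - b ≤ dist y (ℓ S) := fun S => by
    have h := hg.abs_sub_le (ℓ S) y
    rw [hℓ.2.2, dist_comm] at h
    linarith [le_abs_self (g z + S - g y)]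
  -- `d(y, ℓ S)² = (S - b)² + E`, so `d(y, ℓ S) - (S - b) = E / (d(y, ℓ S) + S - b)`.
  have hup : ∀ S, b < S → dist y (ℓ S) ≤ S - b + E / (S - b) := fun S hS => by
    have hsq := hℓ.sq_dist hX hg y S
    rw [← sub_le_iff_le_add', le_div_iff₀ (by linarith)]
    nlinarith [hlow S]
  rw [show g z - g y = -b by ring]
  refine tendsto_of_tendsto_of_tendsto_of_le_of_le' tendsto_const_nhds
    (f := fun S => dist y (ℓ S) - S) (h := fun S => -b + E / (S - b)) ?_
    (Eventually.of_forall fun S => by linarith [hlow S])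
    ((eventually_gt_atTop b).mono fun S hS => by linarith [hup S hS])
  simpa [sub_eq_add_neg] using tendsto_const_nhds.add
    (tendsto_const_nhds.div_atTop (tendsto_atTop_add_const_right _ (-b) tendsto_id))

/-- For large `S`, both `p` and `p'` lie almost opposite to `ℓ (-S)` as seen from `z`. -/
lemma sq_dist_le_of_slope_defect (hX : CurvGE 0 X) {g : X → ℝ} (hg : LipschitzWith 1 g)
    {x : X} {ℓ : ℝ → X} (hℓ : IsSlopeLine g x ℓ) {z p p' : X} {t : ℝ} (ht : 0 < t)
    (hp : dist z p = t) (hp' : dist z p' = t) :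
    dist p p' ^ 2 ≤ 8 * t * ((g z + t - g p) + (g z + t - g p')) := by
  have hA := hℓ.neg.tendsto_dist_sub hX hg.neg z
  have hB := hℓ.neg.tendsto_dist_sub hX hg.neg p
  have hB' := hℓ.neg.tendsto_dist_sub hX hg.neg p'
  have hAtop : Tendsto (fun S => dist z (ℓ (-S))) atTop atTop := by
    simpa using hA.add_atTop tendsto_id
  have hlim : Tendsto (fun S => 8 * t ^ 2 * (((t + dist z (ℓ (-S)) - dist p (ℓ (-S))) +
      (t + dist z (ℓ (-S)) - dist p' (ℓ (-S)))) * (1 / t + 1 / dist z (ℓ (-S)))))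
      atTop (𝓝 (8 * t ^ 2 * (((t + ((-g) x - (-g) z) - ((-g) x - (-g) p)) +
        (t + ((-g) x - (-g) z) - ((-g) x - (-g) p'))) * (1 / t + 0)))) := by
    refine tendsto_const_nhds.mul (Tendsto.mul ?_ (tendsto_const_nhds.add ?_))
    · convert (tendsto_const_nhds.add (hA.sub hB)).add (tendsto_const_nhds.add (hA.sub hB'))
        using 1 <;> ring_nf
    · simpa [Function.comp_def] using tendsto_inv_atTop_zero.comp hAtop
  have hbound := ge_of_tendsto hlim ((hAtop.eventually_gt_atTop 0).mono fun S hS =>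
    hX.sq_dist_le_of_excess ht hp hp' hS)
  refine hbound.trans_eq ?_
  simp only [Pi.neg_apply]
  field_simp
  ring

lemma AffineOn.exists_point_between (hgeo : GeodesicSpace X) {g : X → ℝ} (haff : AffineOn g)
    {a b : X} {t : ℝ} (ht : 0 ≤ t) (htd : t ≤ dist a b) :
    ∃ p, dist a p = t ∧ dist p b = dist a b - t ∧ g p = g a + t / dist a b * (g b - g a) := by
  obtain ⟨σ, hσ, rfl, rfl⟩ := hgeo a b
  set u := t / dist (σ 0) (σ 1)
  have hu : u ∈ Icc (0 : ℝ) 1 := ⟨by positivity, div_le_one_of_le₀ htd dist_nonneg⟩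
  have hut : u * dist (σ 0) (σ 1) = t := by
    rcases (dist_nonneg : 0 ≤ dist (σ 0) (σ 1)).eq_or_lt with h | h
    · rw [← h] at htd ⊢; simp only [mul_zero]; linarith
    · exact div_mul_cancel₀ t h.ne'
  have h0 : (0 : ℝ) ∈ Icc (0 : ℝ) 1 := ⟨le_rfl, zero_le_one⟩
  have h1 : (1 : ℝ) ∈ Icc (0 : ℝ) 1 := ⟨zero_le_one, le_rfl⟩
  refine ⟨σ u, ?_, ?_, ?_⟩
  · rw [hσ 0 h0 u hu, zero_sub, abs_neg, abs_of_nonneg hu.1, hut]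
  · rw [hσ u hu 1 h1, abs_sub_comm, abs_of_nonneg (by linarith [hu.2]), sub_mul, one_mul, hut]
  · rw [haff σ hσ u hu, smul_eq_mul, smul_eq_mul]; ring

lemma exists_dist_eq_slope_gt (hX : CurvGE 0 X) (hgeo : GeodesicSpace X) {g : X → ℝ}
    (hg : LipschitzWith 1 g) (haff : AffineOn g) {x : X} {ℓ : ℝ → X} (hℓ : IsSlopeLine g x ℓ)
    (z : X) {t ε : ℝ} (ht : 0 ≤ t) (hε : 0 < ε) :
    ∃ p, dist z p = t ∧ g z + t - ε < g p := by
  have hD := hℓ.tendsto_dist_sub hX hg z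
  have hDtop : Tendsto (fun S => dist z (ℓ S)) atTop atTop := by
    simpa using hD.add_atTop tendsto_id
  -- On the geodesic from `z` to `ℓ S`, `g` grows at rate `(S + g x - g z) / d(z, ℓ S) → 1`.
  have hdefect : Tendsto (fun S => t * (dist z (ℓ S) - S - (g x - g z)) / dist z (ℓ S))
      atTop (𝓝 0) := by
    refine Tendsto.div_atTop (a := 0) ?_ hDtop
    simpa using (hD.sub_const (g x - g z)).const_mul t
  obtain ⟨S, hSt, hSpos, hSε⟩ := ((hDtop.eventually_ge_atTop t).and
    ((hDtop.eventually_gt_atTop 0).and (hdefect.eventually (gt_mem_nhds hε)))).exists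
  obtain ⟨p, hzp, -, hgp⟩ := haff.exists_point_between hgeo ht hSt
  refine ⟨p, hzp, ?_⟩
  rw [hgp, hℓ.2.2]
  have : t * (dist z (ℓ S) - S - (g x - g z)) / dist z (ℓ S) =
      t - t / dist z (ℓ S) * (g x + S - g z) := by
    field_simp; ring
  linarith

lemma exists_dist_eq_slope_eq [CompleteSpace X] (hX : CurvGE 0 X) (hgeo : GeodesicSpace X)
    {g : X → ℝ} (hg : LipschitzWith 1 g) (haff : AffineOn g) {x : X} {ℓ : ℝ → X}
    (hℓ : IsSlopeLine g x ℓ) (z : X) {t : ℝ} (ht : 0 ≤ t) :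
    ∃ p, dist z p = t ∧ g p = g z + t := by
  rcases ht.eq_or_lt with rfl | ht
  · exact ⟨z, dist_self z, by ring⟩
  choose p hzp hgp using fun n : ℕ =>
    exists_dist_eq_slope_gt hX hgeo hg haff hℓ z ht.le (Nat.one_div_pos_of_nat (n := n))
  have hclose : ∀ n m N : ℕ, N ≤ n → N ≤ m → dist (p n) (p m) ≤ √(16 * t * (1 / (N + 1))) :=
    fun n m N hn hm => by
      have hn' : 1 / ((n : ℝ) + 1) ≤ 1 / (N + 1) := by gcongr
      have hm' : 1 / ((m : ℝ) + 1) ≤ 1 / (N + 1) := by gcongr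
      refine Real.le_sqrt_of_sq_le ?_
      nlinarith [sq_dist_le_of_slope_defect hX hg hℓ ht (hzp n) (hzp m), hgp n, hgp m]
  have hlim : Tendsto (fun N : ℕ => √(16 * t * (1 / ((N : ℝ) + 1)))) atTop (𝓝 0) := by
    simpa using ((tendsto_one_div_add_atTop_nhds_zero_nat).const_mul (16 * t)).sqrt
  obtain ⟨q, hq⟩ := cauchySeq_tendsto_of_complete (cauchySeq_of_le_tendsto_0 _ hclose hlim)
  have hzq : dist z q = t :=
    tendsto_nhds_unique (tendsto_const_nhds.dist hq) (by simp only [hzp]; exact tendsto_const_nhds)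
  refine ⟨q, hzq, le_antisymm ?_ ?_⟩
  · linarith [le_abs_self (g q - g z), hg.abs_sub_le q z, dist_comm q z]
  · have h := (hg.continuous.tendsto q).comp hq |>.add tendsto_one_div_add_atTop_nhds_zero_nat
    rw [add_zero] at h
    exact ge_of_tendsto h <| Eventually.of_forall fun n => by
      simp only [Function.comp_apply]; linarith [hgp n]

lemma eq_of_dist_eq_slope_eq (hX : CurvGE 0 X) {g : X → ℝ} (hg : LipschitzWith 1 g) {x : X}
    {ℓ : ℝ → X} (hℓ : IsSlopeLine g x ℓ) {z p p' : X} {t : ℝ} (hp : dist z p = t)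
    (hgp : g p = g z + t) (hp' : dist z p' = t) (hgp' : g p' = g z + t) : p = p' := by
  rcases (hp ▸ dist_nonneg : 0 ≤ t).eq_or_lt with rfl | ht
  · rw [← dist_eq_zero.1 hp, dist_eq_zero.1 hp']
  have h := sq_dist_le_of_slope_defect hX hg hℓ ht hp hp'
  rw [hgp, hgp'] at h
  exact dist_le_zero.1 (by nlinarith [dist_nonneg (x := p) (y := p')])

lemma dist_eq_of_slope_eq (hX : CurvGE 0 X) (hgeo : GeodesicSpace X) {g : X → ℝ}
    (hg : LipschitzWith 1 g) (haff : AffineOn g) {x : X} {ℓ : ℝ → X} (hℓ : IsSlopeLine g x ℓ)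
    {z p q : X} {s t : ℝ} (hs : 0 ≤ s) (hst : s ≤ t) (hp : dist z p = s) (hgp : g p = g z + s)
    (hq : dist z q = t) (hgq : g q = g z + t) : dist p q = t - s := by
  obtain ⟨p', hzp', hp'q, hgp'⟩ := haff.exists_point_between hgeo hs (hq ▸ hst)
  have hslope : g p' = g z + s := by
    rcases (hq ▸ dist_nonneg : 0 ≤ t).eq_or_lt with rfl | ht
    · rw [hgp', le_antisymm hst hs]; simp
    · rw [hgp', hq, hgq]; field_simp; ring
  rw [← eq_of_dist_eq_slope_eq hX hg hℓ hzp' hslope hp hgp, hp'q, hq]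

/-- Glue the rays of maximal growth of `g` and of `-g`. -/
lemma exists_isSlopeLine [CompleteSpace X] (hX : CurvGE 0 X) (hgeo : GeodesicSpace X)
    {g : X → ℝ} (hg : LipschitzWith 1 g) (haff : AffineOn g) {x : X} {ℓ : ℝ → X}
    (hℓ : IsSlopeLine g x ℓ) (z : X) : ∃ ℓ', IsSlopeLine g z ℓ' := by
  have hpoint : ∀ t, ∃ p, dist z p = |t| ∧ g p = g z + t := fun t => by
    rcases le_total 0 t with ht | ht
    · simpa [abs_of_nonneg ht] using exists_dist_eq_slope_eq hX hgeo hg haff hℓ z ht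
    · obtain ⟨p, hp, hgp⟩ :=
        exists_dist_eq_slope_eq hX hgeo hg.neg haff.neg hℓ.neg z (neg_nonneg.2 ht)
      exact ⟨p, by rw [hp, abs_of_nonpos ht], by rw [Pi.neg_apply, Pi.neg_apply] at hgp; linarith⟩
  choose ρ hρ hgρ using hpoint
  have hdist : ∀ s t, s ≤ t → dist (ρ s) (ρ t) = t - s := fun s t hst => by
    rcases le_total 0 s with hs | hs
    · have ht : 0 ≤ t := hs.trans hst
      exact dist_eq_of_slope_eq hX hgeo hg haff hℓ hs hst (by rw [hρ, abs_of_nonneg hs])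
        (hgρ s) (by rw [hρ, abs_of_nonneg ht]) (hgρ t)
    rcases le_total t 0 with ht | ht
    · rw [dist_comm]
      refine (dist_eq_of_slope_eq hX hgeo hg.neg haff.neg hℓ.neg (neg_nonneg.2 ht)
        (neg_le_neg hst) (by rw [hρ, abs_of_nonpos ht]) (by simp only [Pi.neg_apply, hgρ]; ring)
        (by rw [hρ, abs_of_nonpos hs]) (by simp only [Pi.neg_apply, hgρ]; ring)).trans (by ring)
    · refine le_antisymm ?_ ?_
      · calc dist (ρ s) (ρ t) ≤ dist z (ρ s) + dist z (ρ t) := dist_triangle_left _ _ _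
          _ = t - s := by rw [hρ, hρ, abs_of_nonpos hs, abs_of_nonneg ht]; ring
      · calc t - s = g (ρ t) - g (ρ s) := by rw [hgρ, hgρ]; ring
          _ ≤ dist (ρ s) (ρ t) := by
            rw [dist_comm]; exact (le_abs_self _).trans (hg.abs_sub_le _ _)
  refine ⟨ρ, Isometry.of_dist_eq fun s t => ?_, dist_le_zero.1 ?_, fun t => hgρ t⟩
  · rcases le_total s t with hst | hst
    · rw [hdist s t hst, Real.dist_eq, abs_sub_comm, abs_of_nonneg (by linarith)]
    · rw [dist_comm, hdist t s hst, Real.dist_eq, abs_of_nonneg (by linarith)]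
  · rw [dist_comm, hρ, abs_zero]

lemma LipschitzWith.apply {ι : Type*} [Fintype ι] {F : X → EuclideanSpace ℝ ι}
    (hF : LipschitzWith 1 F) (i : ι) :
    LipschitzWith 1 (fun y => F y i) := by
  simpa [Function.comp_def] using
    ((LipschitzWith.eval i).comp (PiLp.lipschitzWith_ofLp 2 _)).comp hF

lemma AffineOn.apply {ι : Type*} {F : X → EuclideanSpace ℝ ι} (hF : AffineOn F) (i : ι) :
    AffineOn (fun y => F y i) :=
  fun σ hσ t ht => by simp [hF σ hσ t ht]

end Metric

section Coordinates

variable {X ι : Type*} (F : X → EuclideanSpace ℝ ι) (Θ : ι → X → ℝ → X)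

def moveCoord (i : ι) (a : ℝ) (y : X) : X := Θ i y (a - F y i)

def moveCoords (v : EuclideanSpace ℝ ι) (l : List ι) (y : X) : X :=
  l.foldr (fun i y => moveCoord F Θ i (v i) y) y

@[simp]
lemma moveCoords_nil (v : EuclideanSpace ℝ ι) (y : X) : moveCoords F Θ v [] y = y := rfl

@[simp]
lemma moveCoords_cons (v : EuclideanSpace ℝ ι) (i : ι) (l : List ι) (y : X) :
    moveCoords F Θ v (i :: l) y = moveCoord F Θ i (v i) (moveCoords F Θ v l y) := rfl

def moveTo [Fintype ι] (v : EuclideanSpace ℝ ι) (y : X) : X :=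
  moveCoords F Θ v (Finset.univ : Finset ι).toList y

variable [MetricSpace X] {F Θ}

lemma apply_moveCoord_self (hΘ : ∀ i z, IsSlopeLine (fun y => F y i) z (Θ i z)) (i : ι) (a : ℝ)
    (y : X) : F (moveCoord F Θ i a y) i = a := by
  have h := (hΘ i y).2.2 (a - F y i)
  dsimp only at h
  rw [moveCoord, h]; ring

lemma apply_moveCoord_of_ne [Fintype ι] (hF : LipschitzWith 1 F)
    (hΘ : ∀ i z, IsSlopeLine (fun y => F y i) z (Θ i z)) {i j : ι} (hji : j ≠ i) (a : ℝ)
    (y : X) : F (moveCoord F Θ i a y) j = F y j := by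
  refine EuclideanSpace.apply_eq_of_dist_le_abs hji ?_
  have hd := (hΘ i y).1.dist_eq (a - F y i) 0
  rw [(hΘ i y).2.1, Real.dist_eq, sub_zero] at hd
  rw [apply_moveCoord_self hΘ, moveCoord, ← hd]
  simpa using hF.dist_le_mul (Θ i y (a - F y i)) y

lemma moveCoord_of_apply_eq (hΘ : ∀ i z, IsSlopeLine (fun y => F y i) z (Θ i z)) {i : ι}
    {a : ℝ} {y : X} (h : F y i = a) : moveCoord F Θ i a y = y := by
  rw [moveCoord, h, sub_self, (hΘ i y).2.1]

lemma sq_dist_moveCoord [Fintype ι] (hX : CurvGE 0 X) (hF : LipschitzWith 1 F)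
    (hΘ : ∀ i z, IsSlopeLine (fun y => F y i) z (Θ i z)) (i : ι) (a b : ℝ) (y z : X) :
    dist (moveCoord F Θ i a y) (moveCoord F Θ i b z) ^ 2 =
      dist y z ^ 2 - (F y i - F z i) ^ 2 + (a - b) ^ 2 := by
  have hz : dist (moveCoord F Θ i a y) (moveCoord F Θ i b z) ^ 2 =
      dist (moveCoord F Θ i a y) z ^ 2 - 2 * (F (moveCoord F Θ i a y) i - F z i) * (b - F z i)
        + (b - F z i) ^ 2 :=
    (hΘ i z).sq_dist hX (hF.apply i) _ _
  have hy : dist z (moveCoord F Θ i a y) ^ 2 =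
      dist z y ^ 2 - 2 * (F z i - F y i) * (a - F y i) + (a - F y i) ^ 2 :=
    (hΘ i y).sq_dist hX (hF.apply i) _ _
  rw [hz, apply_moveCoord_self hΘ, dist_comm, hy, dist_comm]
  ring

lemma apply_moveCoords [Fintype ι] [DecidableEq ι] (hF : LipschitzWith 1 F)
    (hΘ : ∀ i z, IsSlopeLine (fun y => F y i) z (Θ i z)) (v : EuclideanSpace ℝ ι) (l : List ι)
    (y : X) (j : ι) : F (moveCoords F Θ v l y) j = if j ∈ l then v j else F y j := by
  induction l with
  | nil => simp
  | cons i l ih =>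
    by_cases hji : j = i
    · subst hji; simp [apply_moveCoord_self hΘ]
    · simp [apply_moveCoord_of_ne hF hΘ hji, ih, hji]

lemma moveCoords_of_forall_apply_eq (hΘ : ∀ i z, IsSlopeLine (fun y => F y i) z (Θ i z))
    {v : EuclideanSpace ℝ ι} {l : List ι} {y : X} (h : ∀ i ∈ l, F y i = v i) :
    moveCoords F Θ v l y = y := by
  induction l with
  | nil => rfl
  | cons i l ih =>
    rw [moveCoords_cons, ih fun j hj => h j (List.mem_cons_of_mem i hj),
      moveCoord_of_apply_eq hΘ (h i List.mem_cons_self)]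

lemma sq_dist_moveCoords [Fintype ι] [DecidableEq ι] (hX : CurvGE 0 X) (hF : LipschitzWith 1 F)
    (hΘ : ∀ i z, IsSlopeLine (fun y => F y i) z (Θ i z)) (v v' : EuclideanSpace ℝ ι) {l : List ι}
    (hl : l.Nodup) (y z : X) :
    dist (moveCoords F Θ v l y) (moveCoords F Θ v' l z) ^ 2 =
      dist y z ^ 2 + (l.map fun i => (v i - v' i) ^ 2 - (F y i - F z i) ^ 2).sum := by
  induction l with
  | nil => simp
  | cons i l ih =>
    obtain ⟨hi, hl⟩ := List.nodup_cons.1 hl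
    rw [moveCoords_cons, moveCoords_cons, sq_dist_moveCoord hX hF hΘ, ih hl,
      apply_moveCoords hF hΘ, apply_moveCoords hF hΘ, if_neg hi, if_neg hi, List.map_cons,
      List.sum_cons]
    ring

variable [Fintype ι]

lemma apply_moveTo [DecidableEq ι] (hF : LipschitzWith 1 F)
    (hΘ : ∀ i z, IsSlopeLine (fun y => F y i) z (Θ i z)) (v : EuclideanSpace ℝ ι) (y : X) :
    F (moveTo F Θ v y) = v := by
  ext j
  simp [moveTo, apply_moveCoords hF hΘ]

lemma moveTo_apply_self (hΘ : ∀ i z, IsSlopeLine (fun y => F y i) z (Θ i z)) (y : X) :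
    moveTo F Θ (F y) y = y :=
  moveCoords_of_forall_apply_eq hΘ fun _ _ => rfl

lemma sq_dist_moveTo [DecidableEq ι] (hX : CurvGE 0 X) (hF : LipschitzWith 1 F)
    (hΘ : ∀ i z, IsSlopeLine (fun y => F y i) z (Θ i z)) (v v' : EuclideanSpace ℝ ι) (y z : X) :
    dist (moveTo F Θ v y) (moveTo F Θ v' z) ^ 2 =
      dist y z ^ 2 - dist (F y) (F z) ^ 2 + dist v v' ^ 2 := by
  rw [moveTo, moveTo, sq_dist_moveCoords hX hF hΘ v v' (Finset.nodup_toList _),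
    Finset.sum_map_toList, Finset.sum_sub_distrib, EuclideanSpace.sq_dist_eq_sum,
    EuclideanSpace.sq_dist_eq_sum]
  ring

lemma moveTo_moveTo [DecidableEq ι] (hX : CurvGE 0 X) (hF : LipschitzWith 1 F)
    (hΘ : ∀ i z, IsSlopeLine (fun y => F y i) z (Θ i z)) (v w : EuclideanSpace ℝ ι) (y : X) :
    moveTo F Θ v (moveTo F Θ w y) = moveTo F Θ v y := by
  have hwy := sq_dist_moveTo hX hF hΘ w (F y) y y
  rw [moveTo_apply_self hΘ, dist_self, dist_self] at hwy
  have h := sq_dist_moveTo hX hF hΘ v v (moveTo F Θ w y) y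
  rw [apply_moveTo hF hΘ, hwy, dist_self] at h
  exact pow_eq_zero_iff two_ne_zero |>.1 (by rw [h]; ring) |> dist_eq_zero.1

end Coordinates

lemma exists_isometry_prod_of_sq_dist {X V : Type*} [MetricSpace X]
    [TopologicalSpace.SeparableSpace X] [MetricSpace V] (P : X → X) (F : X → V)
    (hdist : ∀ y z, dist y z ^ 2 = dist (P y) (P z) ^ 2 + dist (F y) (F z) ^ 2)
    (hsurj : ∀ y v, ∃ y', P y' = P y ∧ F y' = v) :
    ∃ (Z : Type) (_ : MetricSpace Z) (Φ : X → WithLp 2 (Z × V)),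
      Isometry Φ ∧ Function.Surjective Φ ∧ ∀ y, F y = (WithLp.equiv 2 (Z × V) (Φ y)).2 := by
  -- The Kuratowski embedding brings `range P` down to `Type`.
  set e := kuratowskiEmbedding X
  let Φ : X → WithLp 2 (range (e ∘ P) × V) := fun y => WithLp.toLp 2 (⟨e (P y), y, rfl⟩, F y)
  refine ⟨range (e ∘ P), inferInstance, Φ, Isometry.of_dist_eq fun y z => ?_, ?_, fun y => rfl⟩
  · rw [WithLp.prod_dist_eq_add (by norm_num), ENNReal.toReal_ofNat]
    change (dist (e (P y)) (e (P z)) ^ (2 : ℝ) + dist (F y) (F z) ^ (2 : ℝ)) ^ (1 / (2 : ℝ)) = _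
    rw [(kuratowskiEmbedding.isometry X).dist_eq, Real.rpow_two, Real.rpow_two, ← hdist,
      ← Real.sqrt_eq_rpow, Real.sqrt_sq dist_nonneg]
  · rintro ⟨⟨_, y, rfl⟩, v⟩
    obtain ⟨y', hy', rfl⟩ := hsurj y v
    exact ⟨y', by simp [Φ, hy']⟩

/-- Splitting off `k` lines: a `1`-Lipschitz affine map `F : X → ℝᵏ` whose
coordinates attain slope `1` along `k` lines through a common point makes `X` split as an
`ℓ²`-product `Z ×₂ ℝᵏ` with `F` the projection onto the `ℝᵏ`-factor. -/
theorem multi_line_splitting (n k : ℕ) (X : Type*) [MetricSpace X] (hX : IsAlexandrov n 0 X)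
    (F : X → EuclideanSpace ℝ (Fin k)) (hlip : LipschitzWith 1 F) (haff : AffineOn F)
    (x : X) (γ : Fin k → ℝ → X) (hγ : ∀ i, Isometry (γ i)) (hγ0 : ∀ i, γ i 0 = x)
    (hslope : ∀ (i : Fin k) (t : ℝ), F (γ i t) i = F x i + t) :
    ∃ (Z : Type) (_ : MetricSpace Z) (Φ : X → WithLp 2 (Z × EuclideanSpace ℝ (Fin k))),
      Isometry Φ ∧ Function.Surjective Φ ∧
      ∀ y : X, F y = ((WithLp.equiv 2 (Z × EuclideanSpace ℝ (Fin k))) (Φ y)).2 := by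
  obtain ⟨hcomplete, hproper, hgeo, -, hcurv⟩ := hX
  have hline : ∀ i, IsSlopeLine (fun y => F y i) x (γ i) := fun i => ⟨hγ i, hγ0 i, hslope i⟩
  choose Θ hΘ using fun i =>
    exists_isSlopeLine hcurv hgeo (hlip.apply i) (haff.apply i) (hline i)
  refine exists_isometry_prod_of_sq_dist (moveTo F Θ (F x)) F (fun y z => ?_) fun y v =>
    ⟨moveTo F Θ v (moveTo F Θ (F x) y), ?_, apply_moveTo hlip hΘ v _⟩
  · rw [sq_dist_moveTo hcurv hlip hΘ, dist_self]; ring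
  · rw [moveTo_moveTo hcurv hlip hΘ, moveTo_moveTo hcurv hlip hΘ]
end
end
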